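/- arXiv:math/0610708 — 9 statements merged into one kernel-verified Lean document; each statement's English description precedes it below -/
import Mathlib

section
/- Let S be a semigroup with identity generated by A = {e, g}, where e is an idempotent (e² = e, e ≠ 1, g⁰ = 1), and let S₀ = eSe = {exe : x ∈ S}. Suppose that for all nonnegative integers i₁, j₁, i₂, j₂, the sets gⁱ¹S₀gʲ¹ and gⁱ²S₀gʲ² intersect if and only if (i₁, j₁) = (i₂, j₂). For nonnegative integers i, j let γ_{i,j}(n) = card{y ∈ gⁱS₀gʲ : ℓ_A(y) ≤ n} and γ₀(n) = γ_{0,0}(n). Then γ_{i,j}(n) ≤ γ₀(n − i − j) for all n. -/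
open Filter

/-- `A` generates the semigroup-with-identity `S`: every element of `S` is a
(finite, possibly empty) product of elements of `A`. -/
def Generates {S : Type*} [Monoid S] (A : Set S) : Prop :=
  ∀ x : S, ∃ l : List S, (∀ a ∈ l, a ∈ A) ∧ l.prod = x

/-- The length `ℓ_A(x)`: the least `m` such that `x` is a product of `m` elements
of `A` (with `ℓ_A(1) = 0` via the empty product). -/
noncomputable def wordLen {S : Type*} [Monoid S] (A : Set S) (x : S) : ℕ :=
  sInf {m : ℕ | ∃ l : List S, (∀ a ∈ l, a ∈ A) ∧ l.length = m ∧ l.prod = x}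

lemma wordLen_exists_word {S : Type*} [Monoid S] {A : Set S} (hgen : Generates A) (x : S) :
    ∃ l : List S, (∀ a ∈ l, a ∈ A) ∧ l.length = wordLen A x ∧ l.prod = x := by
  have hne : {m : ℕ | ∃ l : List S, (∀ a ∈ l, a ∈ A) ∧ l.length = m ∧ l.prod = x}.Nonempty := by
    obtain ⟨l, hl, hp⟩ := hgen x
    exact ⟨l.length, l, hl, rfl, hp⟩
  exact Nat.sInf_mem hne

lemma wordLen_le {S : Type*} [Monoid S] {A : Set S} {x : S} {l : List S}
    (hl : ∀ a ∈ l, a ∈ A) (hp : l.prod = x) : wordLen A x ≤ l.length :=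
  Nat.sInf_le ⟨l, hl, rfl, hp⟩

lemma ball_finite {S : Type*} [Monoid S] (e g : S) (hgen : Generates ({e, g} : Set S)) (n : ℕ) :
    {x : S | wordLen ({e, g} : Set S) x ≤ n}.Finite := by
  have hA : ({e, g} : Set S).Finite := (Set.finite_singleton g).insert e
  have : Finite (↥({e, g} : Set S)) := hA.to_subtype
  have hfin : {l : List ↥({e, g} : Set S) | l.length ≤ n}.Finite :=
    List.finite_length_le _ n
  refine (hfin.image (fun l => (l.map Subtype.val).prod)).subset ?_
  intro x hx
  obtain ⟨l, hl, hlen, hp⟩ := wordLen_exists_word hgen x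
  refine ⟨l.attach.map (fun p => ⟨p.1, hl p.1 p.2⟩), ?_, ?_⟩
  · simp only [Set.mem_setOf_eq] at hx
    simp only [Set.mem_setOf_eq, List.length_map, List.length_attach]
    omega
  · simp only [List.map_map]
    have : (l.attach.map fun p => p.1) = l := List.attach_map_subtype_val l
    simpa [Function.comp] using congrArg List.prod this |>.trans hp

lemma core {S : Type*} [Monoid S] (e g : S) (he : e * e = e) (l : List S)
    (hl : ∀ a ∈ l, a ∈ ({e, g} : Set S)) :
    (l.prod = g ^ l.length) ∨
    (∃ a b y k, l.prod = g ^ a * (e * y * e) * g ^ b ∧ a + b + k = l.length ∧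
      ∃ l₂ : List S, (∀ c ∈ l₂, c ∈ ({e, g} : Set S)) ∧ l₂.length = k ∧
        l₂.prod = e * y * e) := by
  induction l with
  | nil => left; simp
  | cons c t ih =>
    have hc : c = e ∨ c = g := hl c (List.mem_cons_self ..)
    have ht : ∀ a ∈ t, a ∈ ({e, g} : Set S) := fun a ha => hl a (List.mem_cons_of_mem _ ha)
    rcases ih ht with h | ⟨a, b, y, k, hp, hlen, l₂, hl₂, hk, hpz⟩
    · rcases hc with rfl | rfl
      · right
        refine ⟨0, t.length, 1, 1, ?_, by simp, [c], by simp, rfl, by simp [he]⟩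
        simp [h, he, mul_assoc]
      · left; simp [h, pow_succ']
    · rcases hc with rfl | rfl
      · right
        have hee : ∀ x : S, c * (c * x) = c * x := fun x => by rw [← mul_assoc, he]
        refine ⟨0, b, c * g ^ a * c * y, 1 + a + k,
          ?_, by simp; omega, c :: (List.replicate a g ++ l₂), ?_, by simp [hk]; omega, ?_⟩
        · simp [hp, mul_assoc, hee]
        · intro d hd
          rcases List.mem_cons.1 hd with rfl | hd'
          · exact Or.inl rfl
          · rcases List.mem_append.1 hd' with h1 | h2
            · exact Or.inr (List.eq_of_mem_replicate h1)
            · exact hl₂ d h2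
        · simp [hpz, mul_assoc, hee]
      · right
        exact ⟨a + 1, b, y, k, by simp [hp, pow_succ', mul_assoc], by simp; omega, l₂, hl₂, hk, hpz⟩

/-- let `S` be a semigroup with identity generated by `A = {e, g}`
with `e` idempotent, `e ≠ 1`, and let `S₀ = eSe`.  If the sets `gⁱ¹S₀gʲ¹` and
`gⁱ²S₀gʲ²` intersect exactly when `(i₁,j₁) = (i₂,j₂)`, then
`γ_{i,j}(n) ≤ γ₀(n - i - j)` for all `i, j, n`, where
`γ_{i,j}(n) = card {y ∈ gⁱS₀gʲ : ℓ_A(y) ≤ n}` and `γ₀ = γ_{0,0}`. -/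
theorem stmt3 {S : Type*} [Monoid S] (e g : S)
    (hgen : Generates ({e, g} : Set S)) (h1 : (1 : S) ∉ ({e, g} : Set S))
    (he : e * e = e)
    (hcond : ∀ i₁ j₁ i₂ j₂ : ℕ,
      ({x : S | ∃ y : S, x = g ^ i₁ * (e * y * e) * g ^ j₁} ∩
        {x : S | ∃ y : S, x = g ^ i₂ * (e * y * e) * g ^ j₂}).Nonempty ↔
        (i₁, j₁) = (i₂, j₂)) :
    ∀ i j n : ℕ,
      Set.ncard {x : S | (∃ y : S, x = g ^ i * (e * y * e) * g ^ j) ∧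
          wordLen ({e, g} : Set S) x ≤ n} ≤
        Set.ncard {x : S | (∃ y : S, x = e * y * e) ∧
          wordLen ({e, g} : Set S) x ≤ n - i - j} := by
  intro i j n
  set A : Set S := ({e, g} : Set S) with hA
  set src := {x : S | (∃ y : S, x = g ^ i * (e * y * e) * g ^ j) ∧ wordLen A x ≤ n} with hsrc
  set tgt := {x : S | (∃ y : S, x = e * y * e) ∧ wordLen A x ≤ n - i - j} with htgt
  have htfin : tgt.Finite :=
    (ball_finite e g hgen (n - i - j)).subset (fun x hx => hx.2)
  -- key extraction
  have key : ∀ x ∈ src, ∃ z, z ∈ tgt ∧ x = g ^ i * z * g ^ j := by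
    rintro x ⟨⟨y, hxy⟩, hxn⟩
    obtain ⟨l, hl, hlen, hp⟩ := wordLen_exists_word hgen x
    rcases core e g he l hl with h | ⟨a, b, y', k, hpr, hablen, l₂, hl₂, hk, hpz⟩
    · -- x = g ^ |l|, contradiction
      exfalso
      have hm : x = g ^ l.length := hp ▸ h
      have hne : ({x : S | ∃ y : S, x = g ^ (i+1) * (e * y * e) * g ^ j} ∩
          {x : S | ∃ y : S, x = g ^ i * (e * y * e) * g ^ (j+1)}).Nonempty := by
        refine ⟨g * x, ⟨y, ?_⟩, ⟨y, ?_⟩⟩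
        · rw [hxy]; simp [pow_succ', mul_assoc]
        · have : g * x = x * g := by
            rw [hm, ← pow_succ, ← pow_succ']
          rw [this, hxy]; simp [pow_succ, mul_assoc]
      have := (hcond (i+1) j i (j+1)).1 hne
      simp at this
    · have hx2 : x = g ^ a * (e * y' * e) * g ^ b := hp ▸ hpr
      have hab : (a, b) = (i, j) :=
        (hcond a b i j).1 ⟨x, ⟨y', hx2⟩, ⟨y, hxy⟩⟩
      obtain ⟨rfl, rfl⟩ : a = i ∧ b = j := by
        constructor <;> [exact congrArg Prod.fst hab; exact congrArg Prod.snd hab]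
      refine ⟨e * y' * e, ⟨⟨y', rfl⟩, ?_⟩, hx2⟩
      have hwl : wordLen A (e * y' * e) ≤ k := hk ▸ wordLen_le hl₂ hpz
      omega
  classical
  have hF : ∀ x : S, ∃ z : S, x ∈ src → z ∈ tgt ∧ x = g ^ i * z * g ^ j := by
    intro x
    by_cases hx : x ∈ src
    · obtain ⟨z, hz⟩ := key x hx; exact ⟨z, fun _ => hz⟩
    · exact ⟨1, fun h => absurd h hx⟩
  choose F hFspec using hF
  refine Set.ncard_le_ncard_of_injOn F (fun x hx => (hFspec x hx).1) ?_ htfin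
  intro x₁ h₁ x₂ h₂ hfe
  have e1 := (hFspec x₁ h₁).2
  have e2 := (hFspec x₂ h₂).2
  rw [e1, e2, hfe]
end

section
/- Let S be a semigroup with identity generated by A = {e, g}, where e is an idempotent, and let S₀ = eSe. Suppose that (i) e g^{k₁} e g^{k₂} e = e g^{k₂} e g^{k₁} e for all nonnegative integers k₁, k₂, and (ii) for all nonnegative integers i₁, j₁, i₂, j₂, the sets gⁱ¹S₀gʲ¹ and gⁱ²S₀gʲ² intersect if and only if (i₁, j₁) = (i₂, j₂). Then S has subexponential growth, i.e., lim_{n→∞} (log γ_A(n))/n = 0. -/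
open Filter

/-- The growth function `γ_A(n)`: the number of elements expressible as a product
of at most `n` elements of `A` (equivalently, the number of `x` with `ℓ_A(x) ≤ n`). -/
noncomputable def growth {S : Type*} [Monoid S] (A : Set S) (n : ℕ) : ℕ :=
  Set.ncard {x : S | ∃ l : List S, (∀ a ∈ l, a ∈ A) ∧ l.length ≤ n ∧ l.prod = x}

/-!
Every word in `e` and `g` is either a power of `g` or of the form
`g ^ i * e * g ^ k₁ * e * ⋯ * g ^ kₘ * e * g ^ j`, and by the commutation hypothesis and
`e * e = e` the middle factor depends only on the multiset `{k₁, …, kₘ}`. For a word of length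
at most `n` we have `∑ (kᵢ + 1) ≤ n`, so this multiset has at most `2√n` distinct values, and
every value and multiplicity is at most `n`. Hence `γ(n) ≤ (n + 2) ^ O(√n)`, and
`log γ(n) / n = O(log n / √n)` tends to `0`.
-/

section Words

variable {S : Type*} [Monoid S] (e g : S)

def chainProd (L : List ℕ) : S := e * (L.map fun k => g ^ k * e).prod

@[simp]
lemma chainProd_nil : chainProd e g [] = e := by
  simp [chainProd]

lemma chainProd_cons (k : ℕ) (L : List ℕ) :
    chainProd e g (k :: L) = e * g ^ k * chainProd e g L := by
  simp [chainProd, mul_assoc]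

variable {e g}

lemma mul_chainProd_of_mul_self (he : e * e = e) (L : List ℕ) :
    e * chainProd e g L = chainProd e g L := by
  simp [chainProd, ← mul_assoc, he]

lemma chainProd_perm (he : e * e = e)
    (hcomm : ∀ k₁ k₂ : ℕ, e * g ^ k₁ * e * g ^ k₂ * e = e * g ^ k₂ * e * g ^ k₁ * e)
    {L₁ L₂ : List ℕ} (h : L₁.Perm L₂) : chainProd e g L₁ = chainProd e g L₂ := by
  induction h with
  | nil => rfl
  | cons a _ ih => rw [chainProd_cons, chainProd_cons, ih]
  | swap a b L =>
    rw [chainProd_cons, chainProd_cons, chainProd_cons, chainProd_cons,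
      ← mul_chainProd_of_mul_self he L]
    simpa only [mul_assoc] using congrArg (· * chainProd e g L) (hcomm b a)
  | trans _ _ ih₁ ih₂ => rw [ih₁, ih₂]

lemma list_prod_eq_pow_or_chainProd (l : List S) (hl : ∀ a ∈ l, a ∈ ({e, g} : Set S)) :
    (∃ c ≤ l.length, l.prod = g ^ c) ∨
      ∃ i j : ℕ, ∃ L : List ℕ, i + j + L.sum + L.length < l.length ∧
        l.prod = g ^ i * chainProd e g L * g ^ j := by
  induction l with
  | nil => exact Or.inl ⟨0, le_rfl, by simp⟩
  | cons a t ih =>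
    have ha : a = e ∨ a = g := by simpa using hl a (by simp)
    rcases ih fun b hb => hl b (List.mem_cons_of_mem a hb) with
        ⟨c, hc, ht⟩ | ⟨i, j, L, hlen, ht⟩ <;> rcases ha with rfl | rfl <;>
      simp only [List.prod_cons, List.length_cons, ht]
    · exact Or.inr ⟨0, c, [], by simpa using hc, by simp⟩
    · exact Or.inl ⟨c + 1, by omega, (pow_succ' a c).symm⟩
    · refine Or.inr ⟨0, j, i :: L, by rw [List.sum_cons, List.length_cons]; omega, ?_⟩
      simp [chainProd_cons, mul_assoc]
    · refine Or.inr ⟨i + 1, j, L, by omega, ?_⟩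
      simp [pow_succ', mul_assoc]

end Words

open Finset

lemma Finset.card_le_two_mul_sqrt_of_sum_succ_le {s : Finset ℕ} {n : ℕ}
    (h : ∑ v ∈ s, (v + 1) ≤ n) : #s ≤ 2 * Nat.sqrt n := by
  set k := Nat.sqrt n
  have hsmall : #(s.filter (· < k)) ≤ k := by
    simpa using card_le_card fun v hv => mem_range.2 (mem_filter.1 hv).2
  have hlarge : #(s.filter (¬ · < k)) * (k + 1) ≤ n :=
    calc #(s.filter (¬ · < k)) * (k + 1) ≤ ∑ v ∈ s.filter (¬ · < k), (v + 1) := by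
          rw [← smul_eq_mul]
          exact card_nsmul_le_sum _ _ _ fun v hv => by simp only [mem_filter] at hv; omega
      _ ≤ ∑ v ∈ s, (v + 1) := sum_le_sum_of_subset (filter_subset _ _)
      _ ≤ n := h
  have hlarge' : #(s.filter (¬ · < k)) < k + 1 :=
    Nat.lt_of_mul_lt_mul_right (hlarge.trans_lt (Nat.lt_succ_sqrt n))
  rw [← card_filter_add_card_filter_not (· < k)]
  omega

lemma Multiset.card_toFinset_le_two_mul_sqrt {m : Multiset ℕ} {n : ℕ}
    (h : m.sum + Multiset.card m ≤ n) : #m.toFinset ≤ 2 * Nat.sqrt n := by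
  refine card_le_two_mul_sqrt_of_sum_succ_le (le_trans ?_ h)
  calc ∑ v ∈ m.toFinset, (v + 1) ≤ ∑ v ∈ m.toFinset, m.count v • (v + 1) :=
        sum_le_sum fun v hv =>
          Nat.le_mul_of_pos_left _ (Multiset.count_pos.2 (Multiset.mem_toFinset.1 hv))
    _ = m.sum + Multiset.card m := by
        rw [← Finset.sum_multiset_map_count]
        simp [Multiset.sum_map_add]

lemma Fin.sum_univ_getD {α M : Type*} [AddCommMonoid M] {φ : α → M} {d : α} (hd : φ d = 0) :
    ∀ {r : ℕ} (l : List α), l.length ≤ r → ∑ i : Fin r, φ (l.getD i d) = (l.map φ).sum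
  | r, [], _ => by simp [hd]
  | r + 1, a :: l, hl => by
    rw [Fin.sum_univ_succ]
    simp only [Fin.val_zero, Fin.val_succ, List.getD_cons_zero, List.getD_cons_succ,
      Fin.sum_univ_getD hd l (by simpa using hl), List.map_cons, List.sum_cons]

/-- Pairs `(v, 0)` contribute nothing, so they serve as padding. -/
def sumReplicate {r : ℕ} (f : Fin r → ℕ × ℕ) : Multiset ℕ :=
  ∑ i, Multiset.replicate (f i).2 (f i).1

lemma mem_image_sumReplicate {m : Multiset ℕ} {n : ℕ} (h : m.sum + Multiset.card m ≤ n) :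
    m ∈ (Fintype.piFinset fun _ : Fin (2 * Nat.sqrt n) => range (n + 1) ×ˢ range (n + 1)).image
      sumReplicate := by
  set l := m.toFinset.toList.map fun v => (v, m.count v)
  have hlen : l.length ≤ 2 * Nat.sqrt n := by
    simpa [l] using Multiset.card_toFinset_le_two_mul_sqrt h
  have hl : ∀ p ∈ l, p ∈ range (n + 1) ×ˢ range (n + 1) := by
    simp only [l, List.mem_map, mem_toList, Multiset.mem_toFinset, mem_product, mem_range]
    rintro _ ⟨v, hv, rfl⟩
    have := Multiset.le_sum_of_mem hv
    have := Multiset.count_le_card v m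
    constructor <;> omega
  refine mem_image.2 ⟨fun i => l.getD i (0, 0), Fintype.mem_piFinset.2 fun i => ?_, ?_⟩
  · rw [List.getD_eq_getElem?_getD]
    cases hi : l[(i : ℕ)]? with
    | none => simp
    | some p => exact hl p (List.mem_of_getElem? hi)
  · rw [sumReplicate, Fin.sum_univ_getD (φ := fun p => Multiset.replicate p.2 p.1) (by simp) l hlen]
    simp only [l, List.map_map, Function.comp_def, sum_map_toList, ← Multiset.nsmul_singleton]
    exact Multiset.toFinset_sum_count_nsmul_eq m

lemma succ_add_pow_le_pow_succ (n k : ℕ) : n + 1 + (n + 1) ^ k ≤ (n + 2) ^ (k + 1) :=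
  calc n + 1 + (n + 1) ^ k ≤ (n + 2) ^ k * (n + 1) + (n + 2) ^ k :=
        add_le_add (Nat.le_mul_of_pos_left _ (by positivity)) (Nat.pow_le_pow_left (by omega) _)
    _ = (n + 2) ^ (k + 1) := by ring

lemma growth_le_pow_sqrt {S : Type*} [Monoid S] {e g : S} (he : e * e = e)
    (hcomm : ∀ k₁ k₂ : ℕ, e * g ^ k₁ * e * g ^ k₂ * e = e * g ^ k₂ * e * g ^ k₁ * e) (n : ℕ) :
    growth ({e, g} : Set S) n ≤ (n + 2) ^ (4 * (Nat.sqrt n + 1)) := by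
  classical
  set B := (Fintype.piFinset fun _ : Fin (2 * Nat.sqrt n) => range (n + 1) ×ˢ range (n + 1)).image
    sumReplicate
  set T : Finset S := (range (n + 1)).image (g ^ ·) ∪ (range (n + 1) ×ˢ range (n + 1) ×ˢ B).image
    fun p => g ^ p.1 * chainProd e g (p.2.2.sort (· ≤ ·)) * g ^ p.2.1
  have hcover : {x : S | ∃ l : List S, (∀ a ∈ l, a ∈ ({e, g} : Set S)) ∧ l.length ≤ n ∧
      l.prod = x} ⊆ T := by
    rintro _ ⟨l, hl, hlen, rfl⟩
    rcases list_prod_eq_pow_or_chainProd l hl with ⟨c, hc, hx⟩ | ⟨i, j, L, hL, hx⟩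
    · exact mem_union_left _ (mem_image.2 ⟨c, mem_range.2 (by omega), hx.symm⟩)
    · have hsort : (Multiset.sort (L : Multiset ℕ) (· ≤ ·)).Perm L :=
        Multiset.coe_eq_coe.1 (Multiset.sort_eq _ _)
      refine mem_union_right _ (mem_image.2 ⟨(i, j, L), ?_, ?_⟩)
      · simp only [mem_product, mem_range]
        refine ⟨by omega, by omega, mem_image_sumReplicate ?_⟩
        rw [Multiset.sum_coe, Multiset.coe_card]
        omega
      · rw [hx, chainProd_perm he hcomm hsort]
  have hB : #B ≤ (n + 1) ^ (4 * Nat.sqrt n) :=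
    card_image_le.trans (by simp [← sq, ← pow_mul, ← mul_assoc])
  calc growth ({e, g} : Set S) n ≤ #T :=
        (Set.ncard_le_ncard hcover T.finite_toSet).trans (Set.ncard_coe_finset T).le
    _ ≤ (n + 1) + (n + 1) * ((n + 1) * #B) := by
        exact (card_union_le _ _).trans (add_le_add (card_image_le.trans (by simp))
          (card_image_le.trans (by simp)))
    _ ≤ (n + 1) + (n + 1) * ((n + 1) * (n + 1) ^ (4 * Nat.sqrt n)) := by grw [hB]
    _ = (n + 1) + (n + 1) ^ (4 * Nat.sqrt n + 2) := by ring
    _ ≤ (n + 2) ^ (4 * Nat.sqrt n + 3) := succ_add_pow_le_pow_succ n _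
    _ ≤ (n + 2) ^ (4 * (Nat.sqrt n + 1)) := Nat.pow_le_pow_right (by omega) (by omega)

open Topology

lemma tendsto_log_div_sqrt_natCast_add_two :
    Tendsto (fun n : ℕ => Real.log ((n : ℝ) + 2) / √((n : ℝ) + 2)) atTop (𝓝 0) := by
  have h := (isLittleO_log_rpow_atTop one_half_pos).tendsto_div_nhds_zero
  simp only [← Real.sqrt_eq_rpow] at h
  exact h.comp (tendsto_atTop_add_const_right _ 2 tendsto_natCast_atTop_atTop)

lemma tendsto_log_div_of_le_pow_sqrt {u : ℕ → ℕ} {C : ℕ}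
    (h : ∀ n, u n ≤ (n + 2) ^ (C * (Nat.sqrt n + 1))) :
    Tendsto (fun n : ℕ => Real.log (u n) / n) atTop (𝓝 0) := by
  have hlim := tendsto_log_div_sqrt_natCast_add_two.const_mul (6 * C : ℝ)
  rw [mul_zero] at hlim
  refine squeeze_zero' (Eventually.of_forall fun n => by positivity) ?_ hlim
  filter_upwards [eventually_ge_atTop 1] with n hn
  set x : ℝ := (n : ℝ) + 2
  have hnx : x / 3 ≤ n := by
    have : (1 : ℝ) ≤ n := by exact_mod_cast hn
    linarith
  have hx : 1 ≤ x := by linarith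
  have hlogx : 0 ≤ Real.log x := Real.log_nonneg hx
  have hlog : Real.log (u n) ≤ C * (Nat.sqrt n + 1) * Real.log x := by
    rcases (u n).eq_zero_or_pos with h0 | hpos
    · rw [h0, Nat.cast_zero, Real.log_zero]
      positivity
    · calc Real.log (u n) ≤ Real.log (x ^ (C * (Nat.sqrt n + 1))) :=
            Real.log_le_log (by exact_mod_cast hpos) (by simp only [x]; exact_mod_cast h n)
        _ = C * (Nat.sqrt n + 1) * Real.log x := by rw [Real.log_pow]; push_cast; ring
  have hsqrt : (Nat.sqrt n : ℝ) + 1 ≤ 2 * √x := by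
    have := Real.nat_sqrt_le_real_sqrt.trans (Real.sqrt_le_sqrt (by linarith : (n : ℝ) ≤ x))
    linarith [Real.one_le_sqrt.2 hx]
  calc Real.log (u n) / n ≤ C * (2 * √x) * Real.log x / (x / 3) :=
        div_le_div₀ (by positivity) (hlog.trans (by gcongr)) (by positivity) hnx
    _ = 6 * C * (Real.log x / √x) := by
        have hx0 : √x ≠ 0 := by positivity
        field_simp
        rw [Real.sq_sqrt (by positivity)]
        ring

theorem stmt4_general {S : Type*} [Monoid S] (e g : S)
    (he : e * e = e)
    (hcomm : ∀ k₁ k₂ : ℕ,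
      e * g ^ k₁ * e * g ^ k₂ * e = e * g ^ k₂ * e * g ^ k₁ * e) :
    Tendsto (fun n : ℕ =>
        Real.log (growth ({e, g} : Set S) n) / (n : ℝ)) atTop (nhds 0) :=
  tendsto_log_div_of_le_pow_sqrt (growth_le_pow_sqrt he hcomm)

/-- let `S` be a semigroup with identity generated by `A = {e, g}`
with `e` idempotent, and `S₀ = eSe`.  Suppose (i) `e g^{k₁} e g^{k₂} e =
e g^{k₂} e g^{k₁} e` for all `k₁, k₂ ≥ 0`, and (ii) `gⁱ¹S₀gʲ¹` and `gⁱ²S₀gʲ²`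
intersect exactly when `(i₁,j₁) = (i₂,j₂)`.  Then `S` has subexponential growth:
`lim_{n→∞} (log γ_A(n))/n = 0`. -/
theorem stmt4 {S : Type*} [Monoid S] (e g : S)
    (hgen : Generates ({e, g} : Set S)) (h1 : (1 : S) ∉ ({e, g} : Set S))
    (he : e * e = e)
    (hcomm : ∀ k₁ k₂ : ℕ,
      e * g ^ k₁ * e * g ^ k₂ * e = e * g ^ k₂ * e * g ^ k₁ * e)
    (hcond : ∀ i₁ j₁ i₂ j₂ : ℕ,
      ({x : S | ∃ y : S, x = g ^ i₁ * (e * y * e) * g ^ j₁} ∩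
        {x : S | ∃ y : S, x = g ^ i₂ * (e * y * e) * g ^ j₂}).Nonempty ↔
        (i₁, j₁) = (i₂, j₂)) :
    Tendsto (fun n : ℕ =>
        Real.log (growth ({e, g} : Set S) n) / (n : ℝ)) atTop (nhds 0) :=
  stmt4_general e g he hcomm
end

section
/- Let S be a semigroup with identity generated by A = {e, g}, where e is an idempotent with e ≠ 1, satisfying e g^{k₁} e g^{k₂} e = e g^{k₂} e g^{k₁} e for all nonnegative k₁, k₂, and for all nonnegative integers i₁, j₁, i₂, j₂ the sets gⁱ¹(eSe)gʲ¹ and gⁱ²(eSe)gʲ² intersect only if (i₁, j₁) = (i₂, j₂). Then the number of elements of S₀ = eSe of length exactly m with respect to A is at most p(m), the number of partitions of m, and consequently γ_A(n) ≤ 2(n+1)³ p(n) for all n ≥ 1. -/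
/-!
A word over `{e, g}` multiplies out either to `g ^ L` or to `g ^ i * (e g^k₁ e ⋯ g^kᵣ e) * g ^ j`,
the word having length `i + j + ∑ (kₜ + 1) + 1`. By the commutation relation the middle factor
depends only on the multiset of the `kₜ`, and since `e g⁰ e = e` zeros may be added freely, so it
is determined by the partition of any `n ≥ ∑ (kₜ + 1)` with parts `kₜ + 1` padded by ones. When the
product lies in `eSe`, the separation hypothesis forces `i = j = 0` (and rules out `g ^ L`, as
`e ≠ 1`), which gives the bound `p(m)`; in general there are at most `(n + 1) + (n + 1)² p(n)`
elements of length at most `n`.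
-/

open Filter

/-- `p(n)`, the number of partitions of `n` into positive integer parts. -/
noncomputable def partitionFn (n : ℕ) : ℕ := Nat.card (Nat.Partition n)

lemma exists_length_eq_wordLen {S : Type*} [Monoid S] {A : Set S} (hA : Generates A) (x : S) :
    ∃ l : List S, (∀ a ∈ l, a ∈ A) ∧ l.length = wordLen A x ∧ l.prod = x := by
  obtain ⟨l, hl, hprod⟩ := hA x
  have hnonempty : {m | ∃ l : List S, (∀ a ∈ l, a ∈ A) ∧ l.length = m ∧ l.prod = x}.Nonempty :=
    ⟨l.length, l, hl, rfl, hprod⟩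
  exact Nat.sInf_mem hnonempty

section

variable {S : Type*} [Monoid S] {e g : S}

def eChain (e g : S) (ks : List ℕ) : S := e * (ks.map (fun k => g ^ k * e)).prod

@[simp] lemma eChain_nil : eChain e g [] = e := by simp [eChain]

lemma eChain_cons (k : ℕ) (ks : List ℕ) : eChain e g (k :: ks) = e * g ^ k * eChain e g ks := by
  simp [eChain, mul_assoc]

lemma eChain_perm (hcomm : ∀ k₁ k₂ : ℕ, e * g ^ k₁ * e * g ^ k₂ * e = e * g ^ k₂ * e * g ^ k₁ * e)
    {ks ks' : List ℕ} (h : ks.Perm ks') : eChain e g ks = eChain e g ks' := by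
  induction h with
  | nil => rfl
  | cons k _ ih => rw [eChain_cons, eChain_cons, ih]
  | swap k₁ k₂ ks =>
    simpa [eChain, mul_assoc] using congrArg (· * (ks.map (fun k => g ^ k * e)).prod) (hcomm k₂ k₁)
  | trans _ _ ih₁ ih₂ => rw [ih₁, ih₂]

lemma eChain_replicate_zero_append (he : e * e = e) (r : ℕ) (ks : List ℕ) :
    eChain e g (List.replicate r 0 ++ ks) = eChain e g ks := by
  induction r with
  | zero => rfl
  | succ r ih => rw [List.replicate_succ, List.cons_append, eChain_cons, pow_zero, mul_one,
      ← ih, eChain, ← mul_assoc, he]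

lemma exists_eq_sandwich_eChain (he : e * e = e) (ks : List ℕ) :
    ∃ y, eChain e g ks = e * y * e := by
  induction ks with
  | nil => exact ⟨1, by simp [he]⟩
  | cons k ks ih =>
    obtain ⟨y, hy⟩ := ih
    exact ⟨g ^ k * e * y, by rw [eChain_cons, hy]; simp only [mul_assoc]⟩

lemma prod_eq_pow_or_eq_pow_mul_eChain_mul_pow (l : List S) (hl : ∀ a ∈ l, a ∈ ({e, g} : Set S)) :
    l.prod = g ^ l.length ∨ ∃ i j : ℕ, ∃ ks : List ℕ,
      l.prod = g ^ i * eChain e g ks * g ^ j ∧ i + j + ks.sum + ks.length + 1 = l.length := by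
  induction l with
  | nil => simp
  | cons a l ih =>
    obtain ⟨ha, hl⟩ := List.forall_mem_cons.1 hl
    rcases ih hl with hprod | ⟨i, j, ks, hprod, hlen⟩ <;> rcases ha with rfl | rfl
    · exact Or.inr ⟨0, l.length, [], by simp [hprod], by simp⟩
    · exact Or.inl (by rw [List.prod_cons, hprod, List.length_cons, pow_succ'])
    · refine Or.inr ⟨0, j, i :: ks, ?_, by simp; omega⟩
      rw [List.prod_cons, hprod, eChain_cons]; simp only [pow_zero, one_mul, mul_assoc]
    · refine Or.inr ⟨i + 1, j, ks, ?_, by simp; omega⟩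
      rw [List.prod_cons, hprod, pow_succ']; simp only [mul_assoc]

noncomputable def partitionChain (e g : S) {n : ℕ} (p : Nat.Partition n) : S :=
  eChain e g (p.parts.map (· - 1)).toList

lemma eChain_mem_range_partitionChain (he : e * e = e)
    (hcomm : ∀ k₁ k₂ : ℕ, e * g ^ k₁ * e * g ^ k₂ * e = e * g ^ k₂ * e * g ^ k₁ * e)
    {n : ℕ} {ks : List ℕ} (hks : ks.sum + ks.length ≤ n) :
    eChain e g ks ∈ Set.range (partitionChain e g (n := n)) := by
  let r := n - (ks.sum + ks.length)
  let p : Nat.Partition n :=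
    { parts := ↑(ks.map (· + 1)) + Multiset.replicate r 1
      parts_pos := by
        intro i hi
        rcases Multiset.mem_add.1 hi with hi | hi
        · obtain ⟨k, -, rfl⟩ := List.mem_map.1 (Multiset.mem_coe.1 hi)
          omega
        · rw [Multiset.eq_of_mem_replicate hi]; omega
      parts_sum := by
        simp only [Multiset.sum_add, Multiset.sum_coe, List.sum_map_add, List.map_id_fun', id_eq,
          List.map_const', List.sum_replicate, smul_eq_mul, mul_one, Multiset.sum_replicate, r]
        omega }
  have hperm : ((p.parts.map (· - 1)).toList).Perm (List.replicate r 0 ++ ks) := by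
    rw [← Multiset.coe_eq_coe, Multiset.coe_toList]
    simp [p, Function.comp_def, ← Multiset.coe_replicate, List.perm_append_comm]
  exact ⟨p, (eChain_perm hcomm hperm).trans (eChain_replicate_zero_append he r ks)⟩

lemma exists_eChain_eq_of_prod_eq_sandwich (he : e * e = e) (hne : e ≠ 1)
    (hsep : ∀ (i j : ℕ) (y y' : S), g ^ i * (e * y * e) * g ^ j = e * y' * e → i = 0 ∧ j = 0)
    {l : List S} (hl : ∀ a ∈ l, a ∈ ({e, g} : Set S)) {y : S} (hprod : l.prod = e * y * e) :
    ∃ ks : List ℕ, eChain e g ks = e * y * e ∧ ks.sum + ks.length + 1 = l.length := by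
  rcases prod_eq_pow_or_eq_pow_mul_eChain_mul_pow l hl with hpow | ⟨i, j, ks, hprod', hlen⟩
  · exfalso
    have hsq : g ^ l.length * (e * y * e) * g ^ 0 = e * (y * e * e * y) * e := by
      rw [← hpow, hprod]; simp only [pow_zero, mul_one, mul_assoc]
    have hone : e * y * e = 1 := by rw [← hprod, hpow, (hsep _ 0 y _ hsq).1, pow_zero]
    apply hne
    calc e = e * (e * y * e) := by rw [hone, mul_one]
      _ = e * y * e := by simp only [← mul_assoc, he]
      _ = 1 := hone
  · obtain ⟨y', hy'⟩ := exists_eq_sandwich_eChain (g := g) he ks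
    obtain ⟨rfl, rfl⟩ := hsep i j y' y (by rw [← hy', ← hprod', hprod])
    exact ⟨ks, by simpa [hprod] using hprod'.symm, by omega⟩

lemma sandwich_wordLen_eq_subset_range_partitionChain (hgen : Generates ({e, g} : Set S))
    (he : e * e = e) (hne : e ≠ 1)
    (hcomm : ∀ k₁ k₂ : ℕ, e * g ^ k₁ * e * g ^ k₂ * e = e * g ^ k₂ * e * g ^ k₁ * e)
    (hsep : ∀ (i j : ℕ) (y y' : S), g ^ i * (e * y * e) * g ^ j = e * y' * e → i = 0 ∧ j = 0)
    (m : ℕ) :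
    {x : S | (∃ y : S, x = e * y * e) ∧ wordLen ({e, g} : Set S) x = m} ⊆
      Set.range (partitionChain e g (n := m)) := by
  rintro _ ⟨⟨y, rfl⟩, rfl⟩
  obtain ⟨l, hl, hlen, hprod⟩ := exists_length_eq_wordLen hgen (e * y * e)
  obtain ⟨ks, hks, hlen'⟩ := exists_eChain_eq_of_prod_eq_sandwich he hne hsep hl hprod
  rw [← hlen, ← hks]
  exact eChain_mem_range_partitionChain he hcomm (by omega)

lemma words_subset_range_pow_union_range_partitionChain (he : e * e = e)
    (hcomm : ∀ k₁ k₂ : ℕ, e * g ^ k₁ * e * g ^ k₂ * e = e * g ^ k₂ * e * g ^ k₁ * e) (n : ℕ) :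
    {x : S | ∃ l : List S, (∀ a ∈ l, a ∈ ({e, g} : Set S)) ∧ l.length ≤ n ∧ l.prod = x} ⊆
      Set.range (fun k : Fin (n + 1) => g ^ (k : ℕ)) ∪
      Set.range (fun t : Fin (n + 1) × Fin (n + 1) × Nat.Partition n =>
        g ^ (t.1 : ℕ) * partitionChain e g t.2.2 * g ^ (t.2.1 : ℕ)) := by
  rintro _ ⟨l, hl, hlen, rfl⟩
  rcases prod_eq_pow_or_eq_pow_mul_eChain_mul_pow l hl with hpow | ⟨i, j, ks, hprod, hlen'⟩
  · exact Or.inl ⟨⟨l.length, by omega⟩, hpow.symm⟩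
  · obtain ⟨p, hp⟩ := eChain_mem_range_partitionChain (n := n) he hcomm (ks := ks) (by omega)
    exact Or.inr ⟨(⟨i, by omega⟩, ⟨j, by omega⟩, p), by simp [hp, hprod]⟩

end

lemma Set.ncard_range_le {α β : Type*} [Finite α] (f : α → β) :
    (Set.range f).ncard ≤ Nat.card α := by
  rw [← Nat.card_coe_set_eq]
  exact Finite.card_range_le f

theorem stmt5_general {S : Type*} [Monoid S] (e g : S)
    (hgen : Generates ({e, g} : Set S))
    (he : e * e = e) (hne : e ≠ 1)
    (hcomm : ∀ k₁ k₂ : ℕ,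
      e * g ^ k₁ * e * g ^ k₂ * e = e * g ^ k₂ * e * g ^ k₁ * e)
    (hcond : ∀ i₁ j₁ i₂ j₂ : ℕ,
      ({x : S | ∃ y : S, x = g ^ i₁ * (e * y * e) * g ^ j₁} ∩
        {x : S | ∃ y : S, x = g ^ i₂ * (e * y * e) * g ^ j₂}).Nonempty →
        (i₁, j₁) = (i₂, j₂)) :
    (∀ m : ℕ,
      Set.ncard {x : S | (∃ y : S, x = e * y * e) ∧
          wordLen ({e, g} : Set S) x = m} ≤ partitionFn m) ∧
    ∀ n : ℕ, 1 ≤ n →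
      growth ({e, g} : Set S) n ≤ 2 * (n + 1) ^ 3 * partitionFn n := by
  have hsep (i j : ℕ) (y y' : S) (h : g ^ i * (e * y * e) * g ^ j = e * y' * e) :
      i = 0 ∧ j = 0 := by
    simpa using hcond i j 0 0 ⟨_, ⟨y, rfl⟩, y', by simp [h]⟩
  refine ⟨fun m => ?_, fun n _ => ?_⟩
  · calc _ ≤ (Set.range (partitionChain e g (n := m))).ncard :=
          Set.ncard_le_ncard
            (sandwich_wordLen_eq_subset_range_partitionChain hgen he hne hcomm hsep m)
            (Set.finite_range _)
      _ ≤ partitionFn m := Set.ncard_range_le _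
  · have hp : 0 < partitionFn n := Nat.card_pos
    calc growth ({e, g} : Set S) n
        ≤ (Set.range (fun k : Fin (n + 1) => g ^ (k : ℕ)) ∪
            Set.range (fun t : Fin (n + 1) × Fin (n + 1) × Nat.Partition n =>
              g ^ (t.1 : ℕ) * partitionChain e g t.2.2 * g ^ (t.2.1 : ℕ))).ncard :=
          Set.ncard_le_ncard (words_subset_range_pow_union_range_partitionChain he hcomm n)
            ((Set.finite_range _).union (Set.finite_range _))
      _ ≤ (n + 1) + (n + 1) * ((n + 1) * partitionFn n) :=
          (Set.ncard_union_le _ _).trans (add_le_add ((Set.ncard_range_le _).trans (by simp))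
            ((Set.ncard_range_le _).trans (by simp [partitionFn])))
      _ ≤ 2 * (n + 1) ^ 3 * partitionFn n := by
          have hcube : (n + 1) * (n + 1) ≤ (n + 1) ^ 3 := by
            rw [pow_succ, pow_two]; exact Nat.le_mul_of_pos_right _ n.succ_pos
          nlinarith [Nat.mul_le_mul_right (partitionFn n) hcube]

/-- let `S` be a semigroup with identity generated by `A = {e, g}`
with `e` idempotent, `e ≠ 1`, satisfying `e g^{k₁} e g^{k₂} e = e g^{k₂} e g^{k₁} e`
for all `k₁, k₂ ≥ 0`, and such that `gⁱ¹(eSe)gʲ¹ ∩ gⁱ²(eSe)gʲ² ≠ ∅` only if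
`(i₁,j₁) = (i₂,j₂)`.  Then the number of elements of `S₀ = eSe` of length exactly
`m` is at most `p(m)`, and `γ_A(n) ≤ 2(n+1)³ p(n)` for all `n ≥ 1`. -/
theorem stmt5 {S : Type*} [Monoid S] (e g : S)
    (hgen : Generates ({e, g} : Set S)) (h1 : (1 : S) ∉ ({e, g} : Set S))
    (he : e * e = e) (hne : e ≠ 1)
    (hcomm : ∀ k₁ k₂ : ℕ,
      e * g ^ k₁ * e * g ^ k₂ * e = e * g ^ k₂ * e * g ^ k₁ * e)
    (hcond : ∀ i₁ j₁ i₂ j₂ : ℕ,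
      ({x : S | ∃ y : S, x = g ^ i₁ * (e * y * e) * g ^ j₁} ∩
        {x : S | ∃ y : S, x = g ^ i₂ * (e * y * e) * g ^ j₂}).Nonempty →
        (i₁, j₁) = (i₂, j₂)) :
    (∀ m : ℕ,
      Set.ncard {x : S | (∃ y : S, x = e * y * e) ∧
          wordLen ({e, g} : Set S) x = m} ≤ partitionFn m) ∧
    ∀ n : ℕ, 1 ≤ n →
      growth ({e, g} : Set S) n ≤ 2 * (n + 1) ^ 3 * partitionFn n :=
  stmt5_general e g hgen he hne hcomm hcond
end

section
/- Let S be a semigroup with identity generated by A = {e, g}, where e is an idempotent, and let S₀ = eSe. Suppose e g^{k₁} e g^{k₂} e = e g^{k₂} e g^{k₁} e for all nonnegative integers k₁, k₂. Let φ be a semigroup homomorphism from S₀ into a semigroup (X, ∗) such that the sequence W = {φ(e gᵏ e)}_{k=1}^∞ has many partition products in X. Then S has superpolynomial growth, i.e., lim_{n→∞} (log γ_A(n))/(log n) = ∞. -/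
/-
Each partition product `w_{k₁} ∗ ⋯ ∗ w_{k_r}` with `k₁ + ⋯ + k_r ≤ m` is the image under `φ` of
`e g^{k₁} e ⋯ e g^{k_r} e`, a word of length at most `m + 2r` in `e` and `g`, because `φ` is
multiplicative on the corner `eSe`. Hence `card W_r(m) ≤ γ(m + 2r)`, and since `log (n - 2r) ≥ log n - log 2`
for large `n`, the growth exponent of `S` is at least `Φ(r)` for every `r`.
-/

open Filter

/-- `W_r(n)`: the set of products `w_{k₁} ∗ ⋯ ∗ w_{k_r}` over positive integers
`k₁ ≥ k₂ ≥ ⋯ ≥ k_r` with `k₁ + ⋯ + k_r ≤ n` (products of nonempty lists in a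
semigroup, formed by left folding). -/
def WrSet {X : Type*} [Mul X] (w : ℕ → X) (r n : ℕ) : Set X :=
  {x : X | ∃ k : ℕ, ∃ l : List ℕ, (k :: l).length = r ∧ (∀ m ∈ k :: l, 1 ≤ m) ∧
    (k :: l).sum ≤ n ∧ List.Pairwise (· ≥ ·) (k :: l) ∧
    x = List.foldl (· * ·) (w k) (l.map w)}

/-- `Φ(r) = liminf_{n→∞} (log card W_r(n)) / (log n)`. -/
noncomputable def Phi {X : Type*} [Mul X] (w : ℕ → X) (r : ℕ) : ℝ :=
  Filter.liminf
    (fun n : ℕ => Real.log (Set.ncard (WrSet w r n)) / Real.log n) Filter.atTop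

/-- The sequence `{w_k}` has many partition products: `lim_{r→∞} Φ(r) = ∞`. -/
def ManyPartitionProducts {X : Type*} [Mul X] (w : ℕ → X) : Prop :=
  Filter.Tendsto (Phi w) Filter.atTop Filter.atTop

section WordBall

variable {S : Type*} [Monoid S]

def wordBall (A : Set S) (n : ℕ) : Set S :=
  {x : S | ∃ l : List S, (∀ a ∈ l, a ∈ A) ∧ l.length ≤ n ∧ l.prod = x}

variable {A : Set S}

theorem growth_eq_ncard_wordBall (n : ℕ) : growth A n = (wordBall A n).ncard := rfl

theorem one_mem_wordBall (n : ℕ) : (1 : S) ∈ wordBall A n :=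
  ⟨[], by simp, by simp, rfl⟩

theorem mem_wordBall_of_mem {a : S} (ha : a ∈ A) : a ∈ wordBall A 1 :=
  ⟨[a], by simpa using ha, by simp, by simp⟩

theorem pow_mem_wordBall {a : S} (ha : a ∈ A) (k : ℕ) : a ^ k ∈ wordBall A k :=
  ⟨List.replicate k a, by simp +contextual [ha], by simp, by simp⟩

theorem mul_mem_wordBall {x y : S} {m n : ℕ} (hx : x ∈ wordBall A m)
    (hy : y ∈ wordBall A n) : x * y ∈ wordBall A (m + n) := by
  obtain ⟨l, hlA, hlm, rfl⟩ := hx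
  obtain ⟨l', hlA', hln, rfl⟩ := hy
  refine ⟨l ++ l', ?_, by simp; omega, List.prod_append⟩
  simpa [or_imp, forall_and] using ⟨hlA, hlA'⟩

theorem wordBall_mono {m n : ℕ} (h : m ≤ n) :
    wordBall A m ⊆ wordBall A n := by
  rintro _ ⟨l, hlA, hlm, rfl⟩
  exact ⟨l, hlA, hlm.trans h, rfl⟩

theorem wordBall_finite (hA : A.Finite) (n : ℕ) : (wordBall A n).Finite := by
  have : Finite A := hA.to_subtype
  refine ((List.finite_length_le A n).image fun l => (l.map (↑)).prod).subset ?_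
  rintro _ ⟨l, hlA, hln, rfl⟩
  lift l to List A using hlA
  exact ⟨l, by simpa using hln, rfl⟩

end WordBall

def corner {S : Type*} [Semigroup S] (e : S) (he : IsIdempotentElem e) : Subsemigroup S where
  carrier := {x | ∃ a, x = e * a * e}
  mul_mem' := by
    rintro _ _ ⟨a, rfl⟩ ⟨b, rfl⟩
    exact ⟨a * e * b, by simp only [mul_assoc, he.eq, ← mul_assoc e e]⟩

theorem Subsemigroup.map_foldl_mul {S X : Type*} [Mul S] [Mul X] (T : Subsemigroup S)
    {φ : S → X} (hφ : ∀ x ∈ T, ∀ y ∈ T, φ (x * y) = φ x * φ y) {x : S} (hx : x ∈ T)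
    {l : List S} (hl : ∀ y ∈ l, y ∈ T) :
    φ (l.foldl (· * ·) x) = (l.map φ).foldl (· * ·) (φ x) := by
  induction l generalizing x with
  | nil => rfl
  | cons y l ih =>
    simp only [List.mem_cons, forall_eq_or_imp] at hl
    simp only [List.foldl_cons, List.map_cons]
    rw [ih (T.mul_mem hx hl.1) hl.2, hφ x hx y hl.1]

theorem prod_map_mem_wordBall {S : Type*} [Monoid S] (e g : S) (ks : List ℕ) :
    (ks.map fun j => e * g ^ j * e).prod ∈ wordBall {e, g} (ks.sum + 2 * ks.length) := by
  induction ks with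
  | nil => exact one_mem_wordBall 0
  | cons j ks ih =>
    have heA : e ∈ wordBall ({e, g} : Set S) 1 := mem_wordBall_of_mem (by simp)
    have hgA : g ^ j ∈ wordBall ({e, g} : Set S) j := pow_mem_wordBall (by simp) j
    have hlen : 1 + j + 1 + (ks.sum + 2 * ks.length)
        = (j :: ks).sum + 2 * (j :: ks).length := by
      simp only [List.sum_cons, List.length_cons]; ring
    rw [List.map_cons, List.prod_cons, ← hlen]
    exact mul_mem_wordBall (mul_mem_wordBall (mul_mem_wordBall heA hgA) heA) ih

theorem wrSet_subset_image_wordBall {S X : Type*} [Monoid S] [Mul X] (e g : S)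
    (he : IsIdempotentElem e) {φ : S → X}
    (hφ : ∀ x ∈ corner e he, ∀ y ∈ corner e he, φ (x * y) = φ x * φ y) (r m : ℕ) :
    WrSet (fun k => φ (e * g ^ k * e)) r m ⊆ φ '' wordBall {e, g} (m + 2 * r) := by
  rintro _ ⟨k, l, hlen, -, hsum, -, rfl⟩
  refine ⟨((k :: l).map fun j => e * g ^ j * e).prod,
    wordBall_mono (by omega) (prod_map_mem_wordBall e g (k :: l)), ?_⟩
  have hl : ∀ y ∈ l.map fun j => e * g ^ j * e, y ∈ corner e he := by
    simp only [List.mem_map]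
    rintro _ ⟨j, -, rfl⟩
    exact ⟨g ^ j, rfl⟩
  have hfold : e * g ^ k * e * (l.map fun j => e * g ^ j * e).prod
      = (l.map fun j => e * g ^ j * e).foldl (· * ·) (e * g ^ k * e) :=
    List.foldl_eq_apply_foldr.symm
  rw [List.map_cons, List.prod_cons, hfold, (corner e he).map_foldl_mul hφ ⟨g ^ k, rfl⟩ hl,
    List.map_map]
  rfl

theorem log_sub_log_two_le_log_sub {n s : ℕ} (hn : 0 < n) (hs : 2 * s ≤ n) :
    Real.log n - Real.log 2 ≤ Real.log ↑(n - s) := by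
  have hhalf : (n : ℝ) / 2 ≤ ↑(n - s) := by
    rw [Nat.cast_sub (by omega), div_le_iff₀ two_pos]
    have : (2 * s : ℝ) ≤ n := by exact_mod_cast hs
    linarith
  rw [← Real.log_div (by positivity) two_ne_zero]
  exact Real.log_le_log (by positivity) hhalf

theorem tendsto_log_div_log_of_le_shift {γ : ℕ → ℕ} {c : ℕ → ℕ → ℕ} (s : ℕ → ℕ)
    (hc : Tendsto (fun r => liminf (fun m => Real.log (c r m) / Real.log m) atTop)
      atTop atTop)
    (hle : ∀ r m, c r m ≤ γ (m + s r)) :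
    Tendsto (fun n => Real.log (γ n) / Real.log n) atTop atTop := by
  refine tendsto_atTop.2 fun C₀ => ?_
  set C := max C₀ 0
  obtain ⟨r, hr⟩ := (tendsto_atTop.1 hc (C + 2)).exists
  have hlarge : ∀ᶠ m : ℕ in atTop, (C + 1) * Real.log m < Real.log (c r m) := by
    have hbdd : IsBoundedUnder (· ≥ ·) atTop fun m => Real.log (c r m) / Real.log m :=
      isBoundedUnder_of ⟨0, fun m => div_nonneg (Real.log_natCast_nonneg _)
        (Real.log_natCast_nonneg _)⟩
    filter_upwards [eventually_lt_of_lt_liminf (by linarith : C + 1 < _) hbdd,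
      eventually_ge_atTop (2 : ℕ)] with m hm hm2
    exact (lt_div_iff₀ (Real.log_pos (by exact_mod_cast hm2))).1 hm
  obtain ⟨N, hN⟩ := eventually_atTop.1 hlarge
  have hlog : ∀ᶠ n : ℕ in atTop, (C + 1) * Real.log 2 ≤ Real.log n :=
    (Real.tendsto_log_atTop.comp tendsto_natCast_atTop_atTop).eventually_ge_atTop _
  filter_upwards [eventually_ge_atTop (N + 2 * s r + 2 : ℕ), hlog] with n hn hlogn
  have hlogn_pos : 0 < Real.log n := Real.log_pos (by exact_mod_cast (by omega : 1 < n))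
  have hm := hN (n - s r) (by omega)
  have hc_pos : 0 < (c r (n - s r) : ℝ) := by
    refine Nat.cast_pos.2 (Nat.pos_of_ne_zero fun h0 => ?_)
    have : 0 < Real.log ↑(n - s r) := Real.log_pos (by exact_mod_cast (by omega : 1 < n - s r))
    rw [h0, Nat.cast_zero, Real.log_zero] at hm
    nlinarith [le_max_right C₀ 0]
  have hγ : (c r (n - s r) : ℝ) ≤ γ n := by
    exact_mod_cast (Nat.sub_add_cancel (by omega : s r ≤ n)) ▸ hle r (n - s r)
  rw [le_div_iff₀ hlogn_pos]
  calc C₀ * Real.log n ≤ C * Real.log n := by gcongr; exact le_max_left _ _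
    _ ≤ (C + 1) * (Real.log n - Real.log 2) := by linarith
    _ ≤ (C + 1) * Real.log ↑(n - s r) := by
      gcongr
      exact log_sub_log_two_le_log_sub (by omega) (by omega)
    _ ≤ Real.log (c r (n - s r)) := hm.le
    _ ≤ Real.log (γ n) := Real.log_le_log hc_pos hγ

theorem stmt6_general {S X : Type*} [Monoid S] [Semigroup X] (e g : S)
    (he : e * e = e)
    (φ : S → X)
    (hφ : ∀ x y : S, (∃ a : S, x = e * a * e) → (∃ b : S, y = e * b * e) →
      φ (x * y) = φ x * φ y)
    (hW : ManyPartitionProducts (fun k : ℕ => φ (e * g ^ k * e))) :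
    Tendsto (fun n : ℕ =>
        Real.log (growth ({e, g} : Set S) n) / Real.log n) atTop atTop := by
  have hfin : ∀ n, (wordBall ({e, g} : Set S) n).Finite :=
    wordBall_finite ((Set.finite_singleton g).insert e)
  refine tendsto_log_div_log_of_le_shift (fun r => 2 * r) hW fun r m => ?_
  rw [growth_eq_ncard_wordBall]
  calc (WrSet (fun k => φ (e * g ^ k * e)) r m).ncard
      ≤ (φ '' wordBall {e, g} (m + 2 * r)).ncard :=
        Set.ncard_le_ncard (wrSet_subset_image_wordBall e g he
          (fun x hx y hy => hφ x y hx hy) r m) ((hfin _).image φ)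
    _ ≤ (wordBall {e, g} (m + 2 * r)).ncard := Set.ncard_image_le (hfin _)

/-- let `S` be a semigroup with identity generated by `A = {e, g}`
with `e` idempotent, `S₀ = eSe`, and `e g^{k₁} e g^{k₂} e = e g^{k₂} e g^{k₁} e`
for all `k₁, k₂ ≥ 0`.  If `φ` is a semigroup homomorphism from `S₀` into a
semigroup `X` such that the sequence `{φ(e gᵏ e)}` has many partition products,
then `S` has superpolynomial growth: `lim_{n→∞} (log γ_A(n))/(log n) = ∞`. -/
theorem stmt6 {S X : Type*} [Monoid S] [Semigroup X] (e g : S)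
    (hgen : Generates ({e, g} : Set S)) (h1 : (1 : S) ∉ ({e, g} : Set S))
    (he : e * e = e)
    (hcomm : ∀ k₁ k₂ : ℕ,
      e * g ^ k₁ * e * g ^ k₂ * e = e * g ^ k₂ * e * g ^ k₁ * e)
    (φ : S → X)
    (hφ : ∀ x y : S, (∃ a : S, x = e * a * e) → (∃ b : S, y = e * b * e) →
      φ (x * y) = φ x * φ y)
    (hW : ManyPartitionProducts (fun k : ℕ => φ (e * g ^ k * e))) :
    Tendsto (fun n : ℕ =>
        Real.log (growth ({e, g} : Set S) n) / Real.log n) atTop atTop :=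
  stmt6_general e g he φ hφ hW
end

section
/- For every positive integer d, the sequence W = {dk + 1}_{k=1}^∞ in the multiplicative semigroup of positive integers congruent to 1 modulo d has many partition products; that is, with W_r(n) the set of products (dk₁+1)(dk₂+1)⋯(dk_r+1) over positive integers k₁ ≥ ⋯ ≥ k_r with k₁ + ⋯ + k_r ≤ n and Φ(r) = liminf_{n→∞} (log card(W_r(n)))/(log n), one has lim_{r→∞} Φ(r) = ∞. -/
/-!
The `r`-element subsets of `{1, …, ⌊n / r⌋}` are partitions of at most `n` into `r` distinct
parts, and there are `≫_r n ^ r` of them. The product `P = ∏ (d k + 1)` of such a subset is at most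
`(d n + 1) ^ r`, and it determines the subset up to a choice of `r` divisors of `P`. The divisor
bound `τ(P) ^ m ≪_m P`, taken with `m = r²`, gives `τ(P) ^ r ≪_r n`, so at most `O_r(n)` subsets
share a product. Hence `card W_r(n) ≫_r n ^ (r - 2)` and `Φ(r) ≥ r - 3`.
-/

open Filter

open Finset

theorem succ_pow_le_pow_mul_two_pow (m a : ℕ) : (a + 1) ^ m ≤ m ^ m * 2 ^ a := by
  rcases m.eq_zero_or_pos with rfl | hm
  · simp [Nat.one_le_two_pow]
  have hq : a + 1 ≤ m * 2 ^ (a / m) := calc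
    a + 1 ≤ m * (a / m + 1) := Nat.lt_mul_div_succ a hm
    _ ≤ m * 2 ^ (a / m) := Nat.mul_le_mul_left m Nat.lt_two_pow_self
  calc (a + 1) ^ m ≤ (m * 2 ^ (a / m)) ^ m := Nat.pow_le_pow_left hq m
    _ = m ^ m * 2 ^ (a / m * m) := by rw [mul_pow, ← pow_mul]
    _ ≤ m ^ m * 2 ^ a :=
      Nat.mul_le_mul_left _ (Nat.pow_le_pow_right two_pos (Nat.div_mul_le_self a m))

theorem succ_pow_le_ite_mul_pow (m a : ℕ) {p : ℕ} (hp : 2 ≤ p) :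
    (a + 1) ^ m ≤ (if p < 2 ^ m then m ^ m else 1) * p ^ a := by
  split_ifs with h
  · exact (succ_pow_le_pow_mul_two_pow m a).trans
      (Nat.mul_le_mul_left _ (Nat.pow_le_pow_left hp a))
  · calc (a + 1) ^ m ≤ (2 ^ a) ^ m := Nat.pow_le_pow_left Nat.lt_two_pow_self m
      _ = (2 ^ m) ^ a := by rw [← pow_mul, ← pow_mul, mul_comm]
      _ ≤ 1 * p ^ a := by rw [one_mul]; exact Nat.pow_le_pow_left (not_lt.1 h) a

def divisorBoundConst (m : ℕ) : ℕ := (m ^ m) ^ 2 ^ m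

theorem card_divisors_pow_le (m : ℕ) {P : ℕ} (hP : P ≠ 0) :
    #P.divisors ^ m ≤ divisorBoundConst m * P := by
  have hsmall : ∏ p ∈ P.primeFactors, (if p < 2 ^ m then m ^ m else 1) ≤ divisorBoundConst m := by
    rw [← prod_filter, prod_const]
    refine Nat.pow_le_pow_right Nat.pow_self_pos ?_
    calc #{p ∈ P.primeFactors | p < 2 ^ m} ≤ #(range (2 ^ m)) :=
          card_le_card fun p hp => mem_range.2 (mem_filter.1 hp).2
      _ = 2 ^ m := card_range _
  calc #P.divisors ^ m = ∏ p ∈ P.primeFactors, (P.factorization p + 1) ^ m := by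
        rw [Nat.card_divisors hP, prod_pow]
    _ ≤ ∏ p ∈ P.primeFactors, ((if p < 2 ^ m then m ^ m else 1) * p ^ P.factorization p) :=
        prod_le_prod' fun p hp =>
          succ_pow_le_ite_mul_pow _ _ (Nat.prime_of_mem_primeFactors hp).two_le
    _ = (∏ p ∈ P.primeFactors, (if p < 2 ^ m then m ^ m else 1)) * P := by
        rw [prod_mul_distrib, ← Nat.prod_primeFactors_pow_factorization hP]
    _ ≤ divisorBoundConst m * P := Nat.mul_le_mul_right P hsmall

theorem card_divisors_pow_le_of_le_pow {r N P : ℕ} (hr : r ≠ 0) (hP : P ≠ 0) (hPN : P ≤ N ^ r) :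
    #P.divisors ^ r ≤ divisorBoundConst (r * r) * N := by
  set C := divisorBoundConst (r * r)
  refine (Nat.pow_le_pow_iff_left hr).1 ?_
  calc (#P.divisors ^ r) ^ r = #P.divisors ^ (r * r) := by rw [← pow_mul]
    _ ≤ C * P := card_divisors_pow_le _ hP
    _ ≤ C ^ r * N ^ r := Nat.mul_le_mul (Nat.le_self_pow hr C) hPN
    _ = (C * N) ^ r := (mul_pow C N r).symm

theorem foldl_mul_eq_mul_prod {M : Type*} [Monoid M] (a : M) (l : List M) :
    l.foldl (· * ·) a = a * l.prod := by
  simp [List.foldl_eq_apply_foldr, List.prod_eq_foldr]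

theorem prod_mem_wrSet {X : Type*} [CommMonoid X] (w : ℕ → X) {s : Finset ℕ} {n : ℕ}
    (hs : s.Nonempty) (hpos : ∀ k ∈ s, 1 ≤ k) (hsum : ∑ k ∈ s, k ≤ n) :
    ∏ k ∈ s, w k ∈ WrSet w #s n := by
  set L := s.sort (· ≥ ·)
  have hperm : L.Perm s.toList := sort_perm_toList _ _
  have hlen : L.length = #s := length_sort _
  obtain ⟨k, l, hkl⟩ := List.exists_cons_of_ne_nil
    (List.ne_nil_of_length_pos (hlen ▸ hs.card_pos))
  refine ⟨k, l, ?_, ?_, ?_, ?_, ?_⟩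
  · rwa [← hkl]
  · exact fun m hm => hpos m ((mem_sort _).1 (hkl ▸ hm))
  · rwa [← hkl, hperm.sum_eq, sum_toList]
  · exact hkl ▸ pairwise_sort _ _
  · rw [foldl_mul_eq_mul_prod, ← List.prod_cons, ← List.map_cons, ← hkl, (hperm.map w).prod_eq,
      prod_map_toList]

theorem wrSet_subset_Icc {w : ℕ → ℕ} (hw : Monotone w) (hw₁ : ∀ k, 1 ≤ w k) (r n : ℕ) :
    WrSet w r n ⊆ Set.Icc 1 (w n ^ r) := by
  rintro x ⟨k, l, hlen, -, hsum, -, rfl⟩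
  rw [foldl_mul_eq_mul_prod, ← List.prod_cons, ← List.map_cons]
  refine ⟨List.one_le_prod_of_one_le fun y hy => ?_, ?_⟩
  · obtain ⟨m, -, rfl⟩ := List.mem_map.1 hy
    exact hw₁ m
  · rw [← hlen, ← List.length_map w]
    refine List.prod_le_pow_card _ _ fun y hy => ?_
    obtain ⟨m, hm, rfl⟩ := List.mem_map.1 hy
    exact hw ((List.le_sum_of_mem hm).trans hsum)

theorem ncard_wrSet_le {w : ℕ → ℕ} (hw : Monotone w) (hw₁ : ∀ k, 1 ≤ w k) (r n : ℕ) :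
    (WrSet w r n).ncard ≤ w n ^ r := by
  simpa using Set.ncard_le_ncard (wrSet_subset_Icc hw hw₁ r n) (Set.finite_Icc _ _)

theorem card_filter_prod_eq_le {ι : Type*} [DecidableEq ι] {A : Finset ι} {w : ι → ℕ}
    (hw : Set.InjOn w A) (r : ℕ) {P : ℕ} (hP : P ≠ 0) :
    #{s ∈ A.powersetCard r | ∏ i ∈ s, w i = P} ≤ #P.divisors ^ r := by
  set B := {i ∈ A | w i ∣ P}
  have hsub : {s ∈ A.powersetCard r | ∏ i ∈ s, w i = P} ⊆ B.powersetCard r := by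
    intro s hs
    obtain ⟨hs, hprod⟩ := mem_filter.1 hs
    obtain ⟨hsA, hcard⟩ := mem_powersetCard.1 hs
    exact mem_powersetCard.2
      ⟨fun i hi => mem_filter.2 ⟨hsA hi, hprod ▸ dvd_prod_of_mem w hi⟩, hcard⟩
  have hB : #B ≤ #P.divisors :=
    card_le_card_of_injOn w (fun i hi => Nat.mem_divisors.2 ⟨(mem_filter.1 hi).2, hP⟩)
      (hw.mono (filter_subset _ _))
  calc _ ≤ #(B.powersetCard r) := card_le_card hsub
    _ = (#B).choose r := card_powersetCard _ _
    _ ≤ #B ^ r := Nat.choose_le_pow _ _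
    _ ≤ #P.divisors ^ r := Nat.pow_le_pow_left hB r

section ArithmeticProgression

variable {d : ℕ}

theorem mul_add_one_le_sq {n : ℕ} (hn : d < n) : d * n + 1 ≤ n ^ 2 := by
  nlinarith

theorem choose_le_mul_ncard_wrSet (hd : 0 < d) {r : ℕ} (hr : r ≠ 0) (n : ℕ) :
    (n / r).choose r ≤
      divisorBoundConst (r * r) * (d * n + 1) * (WrSet (fun k => d * k + 1) r n).ncard := by
  set w : ℕ → ℕ := fun k => d * k + 1
  have hw : Monotone w := fun a b hab => by dsimp only [w]; gcongr
  set D := (Icc 1 (n / r)).powersetCard r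
  have hmem : ∀ s ∈ D, ∏ k ∈ s, w k ∈ WrSet w r n := by
    intro s hs
    obtain ⟨hsub, hcard⟩ := mem_powersetCard.1 hs
    have hbound : ∀ k ∈ s, k ≤ n / r := fun k hk => (mem_Icc.1 (hsub hk)).2
    have hsum : ∑ k ∈ s, k ≤ n := calc
      ∑ k ∈ s, k ≤ #s • (n / r) := sum_le_card_nsmul s _ _ hbound
      _ ≤ n := by rw [hcard, smul_eq_mul]; exact Nat.mul_div_le n r
    simpa [hcard] using prod_mem_wrSet w (card_ne_zero.1 (hcard ▸ hr))
      (fun k hk => (mem_Icc.1 (hsub hk)).1) hsum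
  have hfiber : ∀ P ∈ D.image (fun s => ∏ k ∈ s, w k),
      #{s ∈ D | ∏ k ∈ s, w k = P} ≤ divisorBoundConst (r * r) * (d * n + 1) := by
    simp only [mem_image]
    rintro _ ⟨s, hs, rfl⟩
    obtain ⟨hpos, hle⟩ := wrSet_subset_Icc hw (fun _ => Nat.le_add_left 1 _) r n (hmem s hs)
    have hP : ∏ k ∈ s, w k ≠ 0 := Nat.one_le_iff_ne_zero.1 hpos
    have hinj : Set.InjOn w (Icc 1 (n / r) : Finset ℕ) := fun a _ b _ hab =>
      Nat.eq_of_mul_eq_mul_left hd (Nat.add_right_cancel hab)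
    exact (card_filter_prod_eq_le hinj r hP).trans (card_divisors_pow_le_of_le_pow hr hP hle)
  have himage : (D.image fun s => ∏ k ∈ s, w k : Set ℕ) ⊆ WrSet w r n := by
    simpa [Set.subset_def] using hmem
  calc (n / r).choose r = #D := by simp [D]
    _ ≤ divisorBoundConst (r * r) * (d * n + 1) * #(D.image fun s => ∏ k ∈ s, w k) :=
        card_le_mul_card_image D _ hfiber
    _ ≤ _ := Nat.mul_le_mul_left _ (by
        rw [← Set.ncard_coe_finset]
        exact Set.ncard_le_ncard himage ((Set.finite_Icc _ _).subset
          (wrSet_subset_Icc hw (fun _ => Nat.le_add_left 1 _) r n)))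

theorem exists_pow_le_mul_sq_mul_ncard_wrSet (hd : 0 < d) {r : ℕ} (hr : r ≠ 0) :
    ∃ K, ∀ᶠ n in atTop, n ^ r ≤ K * n ^ 2 * (WrSet (fun k => d * k + 1) r n).ncard := by
  refine ⟨(2 * r) ^ r * r.factorial * divisorBoundConst (r * r), ?_⟩
  filter_upwards [eventually_ge_atTop (2 * (r * r)), eventually_gt_atTop d] with n hn hdn
  -- `r (n / r + 1 - r) ≥ n + 1 - r²`, which is at least `n / 2` once `n ≥ 2 r²`
  have hquot : n ≤ 2 * r * (n / r + 1 - r) := by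
    have := Nat.lt_mul_div_succ n (Nat.pos_of_ne_zero hr)
    rw [mul_assoc, Nat.mul_sub]
    omega
  calc n ^ r ≤ (2 * r) ^ r * (n / r + 1 - r) ^ r := by
        rw [← mul_pow]; exact Nat.pow_le_pow_left hquot r
    _ ≤ (2 * r) ^ r * (r.factorial * (n / r).choose r) := by
        rw [← Nat.descFactorial_eq_factorial_mul_choose]
        exact Nat.mul_le_mul_left _ (Nat.pow_sub_le_descFactorial _ _)
    _ ≤ (2 * r) ^ r * (r.factorial *
          (divisorBoundConst (r * r) * (d * n + 1) * (WrSet (fun k => d * k + 1) r n).ncard)) := by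
        gcongr; exact choose_le_mul_ncard_wrSet hd hr n
    _ ≤ _ := by
        have := mul_add_one_le_sq hdn
        calc _ = (2 * r) ^ r * r.factorial * divisorBoundConst (r * r) * (d * n + 1) *
                (WrSet (fun k => d * k + 1) r n).ncard := by ring
          _ ≤ _ := by gcongr

theorem ncard_wrSet_le_pow {r n : ℕ} (hdn : d < n) :
    (WrSet (fun k => d * k + 1) r n).ncard ≤ n ^ (2 * r) := calc
  _ ≤ (d * n + 1) ^ r :=
      ncard_wrSet_le (fun a b hab => by gcongr) (fun _ => Nat.le_add_left 1 _) r n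
  _ ≤ (n ^ 2) ^ r := Nat.pow_le_pow_left (mul_add_one_le_sq hdn) r
  _ = n ^ (2 * r) := by rw [← pow_mul]

end ArithmeticProgression

section Exponents

open Real

theorem log_div_log_le_of_le_pow {c n b : ℕ} (hn : 1 < n) (h : c ≤ n ^ b) :
    log c / log n ≤ b := by
  have hlogn : 0 < log n := log_pos (by exact_mod_cast hn)
  rw [div_le_iff₀ hlogn]
  rcases c.eq_zero_or_pos with rfl | hc
  · simp only [Nat.cast_zero, log_zero]
    positivity
  calc log c ≤ log ((n : ℝ) ^ b) := log_le_log (by exact_mod_cast hc) (by exact_mod_cast h)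
    _ = b * log n := log_pow _ _

theorem sub_sub_one_le_log_div_log {c n a b K : ℕ} (hn : 1 < n) (hK : K ≤ n)
    (h : n ^ a ≤ K * n ^ b * c) : (a : ℝ) - b - 1 ≤ log c / log n := by
  have hlogn : 0 < log n := log_pos (by exact_mod_cast hn)
  have hprod : 0 < K * n ^ b * c := (Nat.pow_pos (n := a) (by omega)).trans_le h
  have hKpos : (0 : ℝ) < K := by
    exact_mod_cast Nat.pos_of_mul_pos_right (Nat.pos_of_mul_pos_right hprod)
  have hcpos : (0 : ℝ) < c := by exact_mod_cast Nat.pos_of_mul_pos_left hprod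
  have hlog : a * log n ≤ log K + b * log n + log c := by
    rw [← log_pow, ← log_pow, ← log_mul hKpos.ne' (by positivity),
      ← log_mul (by positivity) hcpos.ne']
    exact log_le_log (by positivity) (by exact_mod_cast h)
  have hlogK : log K ≤ log n := log_le_log hKpos (by exact_mod_cast hK)
  rw [le_div_iff₀ hlogn]
  linarith

end Exponents

theorem sub_three_le_phi {d : ℕ} (hd : 0 < d) {r : ℕ} (hr : r ≠ 0) :
    (r : ℝ) - 3 ≤ Phi (fun k => d * k + 1) r := by
  obtain ⟨K, hK⟩ := exists_pow_le_mul_sq_mul_ncard_wrSet hd hr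
  refine le_liminf_of_le
    (isCoboundedUnder_ge_of_eventually_le atTop (x := ((2 * r : ℕ) : ℝ)) ?_) ?_
  · filter_upwards [eventually_gt_atTop 1, eventually_gt_atTop d] with n hn hdn
    exact log_div_log_le_of_le_pow hn (ncard_wrSet_le_pow hdn)
  · filter_upwards [hK, eventually_gt_atTop 1, eventually_ge_atTop K] with n hKn hn hnK
    linarith [sub_sub_one_le_log_div_log hn hnK hKn]

/-- for every positive integer `d`, the sequence `{dk + 1}_{k≥1}` in
the multiplicative semigroup of positive integers congruent to `1 mod d` has many
partition products: with `W_r(n)` the set of products `(dk₁+1)⋯(dk_r+1)` over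
positive integers `k₁ ≥ ⋯ ≥ k_r` with `k₁ + ⋯ + k_r ≤ n`, one has
`lim_{r→∞} Φ(r) = ∞`. -/
theorem stmt7 (d : ℕ) (hd : 0 < d) :
    ManyPartitionProducts (fun k : ℕ => d * k + 1) := by
  refine tendsto_atTop_mono' atTop ?_
    (tendsto_atTop_add_const_right atTop (-3) tendsto_natCast_atTop_atTop)
  filter_upwards [eventually_ne_atTop 0] with r hr
  simpa [sub_eq_add_neg] using sub_three_le_phi hd hr
end

section
/- Let c, c₁, d, t be positive real numbers with t > 2, and let {e_k}_{k=1}^∞ be a sequence of real numbers with |e_k| ≤ c₁kᵈ for all k ≥ 1. Then there is an integer k₀ such that the sequence {c·tᵏ + e_k}_{k=k₀}^∞ is strictly increasing, has positive terms, and is a B̂_∞-sequence. -/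
open Finset Filter

/-- Key auxiliary: a max element's term beats the sum of the other side. -/
theorem stmt10_aux (c c₁ d t : ℝ) (hc : 0 < c) (hc₁ : 0 < c₁) (hd : 0 < d)
    (ht : 2 < t) (e : ℕ → ℝ)
    (he : ∀ k : ℕ, 1 ≤ k → |e k| ≤ c₁ * (k : ℝ) ^ d)
    (k₀ : ℕ) (hk₀ : 1 ≤ k₀)
    (hkey : ∀ m : ℕ, k₀ ≤ m → 2 * c₁ * (m : ℝ) ^ (d + 1) < c * t ^ m * (t - 2) / (t - 1))
    (A B : Finset ℕ) (hA : ∀ i ∈ A, k₀ ≤ i) (hB : ∀ j ∈ B, k₀ ≤ j)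
    (hdisj : Disjoint A B) (m : ℕ) (hmA : m ∈ A) (hmax : ∀ x ∈ A ∪ B, x ≤ m)
    (hsum : ∑ i ∈ A, (c * t ^ i + e i) = ∑ j ∈ B, (c * t ^ j + e j)) : False := by
  have ht1 : (1:ℝ) < t - 1 := by linarith
  have ht0 : (0:ℝ) < t - 1 := by linarith
  have hmk : k₀ ≤ m := hA m hmA
  have hm1 : (1:ℝ) ≤ (m:ℝ) := by exact_mod_cast le_trans hk₀ hmk
  have hm0 : (0:ℝ) < (m:ℝ) := by linarith
  -- positivity of terms
  have hpos : ∀ k, k₀ ≤ k → 0 < c * t ^ k + e k := by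
    intro k hk
    have hk1 : (1:ℝ) ≤ (k:ℝ) := by exact_mod_cast le_trans hk₀ hk
    have hek := he k (le_trans hk₀ hk)
    have h1 : (k:ℝ) ^ d ≤ (k:ℝ) ^ (d + 1) :=
      Real.rpow_le_rpow_of_exponent_le hk1 (by linarith)
    have h2 := hkey k hk
    have htk : (0:ℝ) < t ^ k := pow_pos (by linarith) k
    have h3 : c * t ^ k * (t - 2) / (t - 1) ≤ c * t ^ k := by
      rw [div_le_iff₀ ht0]
      nlinarith [mul_pos hc htk]
    have h4 : c₁ * (k:ℝ) ^ d < c * t ^ k := by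
      have : c₁ * (k:ℝ) ^ d ≤ 2 * c₁ * (k:ℝ) ^ (d + 1) := by nlinarith [Real.rpow_pos_of_pos (by linarith : (0:ℝ) < (k:ℝ)) d]
      linarith
    have := abs_le.mp hek
    linarith [this.1]
  -- lower bound on sum over A
  have hAge : c * t ^ m + e m ≤ ∑ i ∈ A, (c * t ^ i + e i) :=
    Finset.single_le_sum (fun i hi => le_of_lt (hpos i (hA i hi))) hmA
  -- B ⊆ range m
  have hBr : B ⊆ Finset.range m := by
    intro j hj
    rw [Finset.mem_range]
    rcases lt_or_eq_of_le (hmax j (Finset.mem_union_right _ hj)) with h | h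
    · exact h
    · exact absurd hmA (Finset.disjoint_right.mp hdisj (h ▸ hj))
  -- upper bound on sum over B
  have hBle : ∑ j ∈ B, (c * t ^ j + e j) ≤ c * t ^ m / (t - 1) + c₁ * (m:ℝ) ^ (d + 1) := by
    have h1 : ∑ j ∈ B, (c * t ^ j + e j) ≤ ∑ j ∈ B, (c * t ^ j + c₁ * (m:ℝ) ^ d) := by
      apply Finset.sum_le_sum
      intro j hj
      have hj1 : 1 ≤ j := le_trans hk₀ (hB j hj)
      have hjm : (j:ℝ) ≤ (m:ℝ) := by exact_mod_cast hmax j (Finset.mem_union_right _ hj)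
      have h6 : c₁ * (j:ℝ) ^ d ≤ c₁ * (m:ℝ) ^ d := by
        have := Real.rpow_le_rpow (by positivity) hjm (le_of_lt hd)
        nlinarith
      linarith [(abs_le.mp (he j hj1)).2]
    have hsplit : ∑ j ∈ B, (c * t ^ j + c₁ * (m:ℝ) ^ d)
        = ∑ j ∈ B, c * t ^ j + ∑ j ∈ B, (c₁ * (m:ℝ) ^ d) := Finset.sum_add_distrib
    have h2 : ∑ j ∈ B, c * t ^ j ≤ c * t ^ m / (t - 1) := by
      have h7 : ∑ j ∈ B, c * t ^ j ≤ ∑ j ∈ Finset.range m, c * t ^ j := by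
        apply Finset.sum_le_sum_of_subset_of_nonneg hBr
        intro j _ _
        positivity
      have hgeom : ∑ j ∈ Finset.range m, t ^ j = (t ^ m - 1) / (t - 1) := by
        rw [geom_sum_eq (by linarith : t ≠ 1)]
      have h3 : ∑ j ∈ Finset.range m, c * t ^ j = c * ((t ^ m - 1) / (t - 1)) := by
        rw [← Finset.mul_sum, hgeom]
      have h4 : c * ((t ^ m - 1) / (t - 1)) ≤ c * t ^ m / (t - 1) := by
        rw [mul_div_assoc]
        gcongr
        linarith
      linarith
    have h3 : ∑ j ∈ B, (c₁ * (m:ℝ) ^ d) ≤ c₁ * (m:ℝ) ^ (d + 1) := by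
      rw [Finset.sum_const, nsmul_eq_mul]
      have hcard : (B.card : ℝ) ≤ (m : ℝ) := by
        exact_mod_cast le_trans (Finset.card_le_card hBr) (by simp)
      have hrpow : (m:ℝ) ^ (d + 1) = (m:ℝ) ^ d * (m:ℝ) := by
        rw [Real.rpow_add_one (ne_of_gt hm0)]
      rw [hrpow]
      have hmd : (0:ℝ) < (m:ℝ) ^ d := Real.rpow_pos_of_pos hm0 d
      nlinarith [mul_le_mul_of_nonneg_right hcard (by positivity : (0:ℝ) ≤ c₁ * (m:ℝ) ^ d)]
    linarith [h1, hsplit, h2, h3]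
  -- combine
  have hem := (abs_le.mp (he m (le_trans hk₀ hmk))).1
  have hkm := hkey m hmk
  have htm : (0:ℝ) < t ^ m := pow_pos (by linarith) m
  have hmd : (m:ℝ) ^ d ≤ (m:ℝ) ^ (d + 1) :=
    Real.rpow_le_rpow_of_exponent_le hm1 (by linarith)
  -- c t^m - c₁ m^d ≤ c t^m/(t-1) + c₁ m^{d+1}
  have hfinal : c * t ^ m - c₁ * (m:ℝ) ^ d ≤ c * t ^ m / (t - 1) + c₁ * (m:ℝ) ^ (d + 1) := by
    linarith [hsum ▸ hAge]
  have h5 : c * t ^ m - c * t ^ m / (t - 1) = c * t ^ m * (t - 2) / (t - 1) := by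
    field_simp
    ring
  nlinarith [Real.rpow_pos_of_pos hm0 (d+1)]

/-- let `c, c₁, d, t` be positive reals with `t > 2`, and let
`{e_k}` be reals with `|e_k| ≤ c₁ kᵈ` for `k ≥ 1`.  Then there is `k₀` such that
the sequence `b_k = c tᵏ + e_k` (for `k ≥ k₀`) has positive terms, is strictly
increasing, and is a `B̂_∞`-sequence (all finite sums of distinct terms with
indices `≥ k₀` are distinct). -/
theorem stmt10 (c c₁ d t : ℝ) (hc : 0 < c) (hc₁ : 0 < c₁) (hd : 0 < d)
    (ht : 2 < t) (e : ℕ → ℝ)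
    (he : ∀ k : ℕ, 1 ≤ k → |e k| ≤ c₁ * (k : ℝ) ^ d) :
    ∃ k₀ : ℕ,
      (∀ k, k₀ ≤ k → 0 < c * t ^ k + e k) ∧
      (∀ k, k₀ ≤ k → c * t ^ k + e k < c * t ^ (k + 1) + e (k + 1)) ∧
      ∀ I J : Finset ℕ, (∀ i ∈ I, k₀ ≤ i) → (∀ j ∈ J, k₀ ≤ j) →
        ∑ i ∈ I, (c * t ^ i + e i) = ∑ j ∈ J, (c * t ^ j + e j) → I = J := by
  have ht1 : (1:ℝ) < t - 1 := by linarith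
  have ht0 : (0:ℝ) < t - 1 := by linarith
  have htp : (0:ℝ) < t := by linarith
  set C : ℝ := c * (t - 2) / (t - 1) with hCdef
  have hC : 0 < C := by
    apply div_pos _ ht0
    nlinarith
  set n : ℕ := ⌈d⌉₊ + 2 with hndef
  have htend : Filter.Tendsto (fun m : ℕ => (m:ℝ) ^ n / t ^ m) Filter.atTop (nhds 0) :=
    tendsto_pow_const_div_const_pow_of_one_lt n (by linarith)
  have hev := htend.eventually_lt_const (show (0:ℝ) < C / (2 * c₁) by positivity)
  obtain ⟨N, hN⟩ := Filter.eventually_atTop.mp hev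
  refine ⟨max N 1, ?_⟩
  set k₀ : ℕ := max N 1 with hk₀def
  have hk₀1 : 1 ≤ k₀ := le_max_right N 1
  -- key inequality
  have hkey : ∀ m : ℕ, k₀ ≤ m → 2 * c₁ * (m : ℝ) ^ (d + 1) < c * t ^ m * (t - 2) / (t - 1) := by
    intro m hm
    have hm1 : (1:ℝ) ≤ (m:ℝ) := by exact_mod_cast le_trans hk₀1 hm
    have htm : (0:ℝ) < t ^ m := pow_pos htp m
    have h1 := hN m (le_trans (le_max_left N 1) hm)
    have h2 : (m:ℝ) ^ n < C / (2 * c₁) * t ^ m := (div_lt_iff₀ htm).mp h1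
    have h3 : (m:ℝ) ^ (d + 1) ≤ (m:ℝ) ^ n := by
      rw [← Real.rpow_natCast (m:ℝ) n]
      apply Real.rpow_le_rpow_of_exponent_le hm1
      have := Nat.le_ceil d
      rw [hndef]
      push_cast
      linarith
    have h4 : 2 * c₁ * (C / (2 * c₁) * t ^ m) = C * t ^ m := by
      field_simp
    have h5 : C * t ^ m = c * t ^ m * (t - 2) / (t - 1) := by
      rw [hCdef]; ring
    nlinarith
  -- positivity
  have hpos : ∀ k, k₀ ≤ k → 0 < c * t ^ k + e k := by
    intro k hk
    have hk1 : (1:ℝ) ≤ (k:ℝ) := by exact_mod_cast le_trans hk₀1 hk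
    have hek := he k (le_trans hk₀1 hk)
    have h1 : (k:ℝ) ^ d ≤ (k:ℝ) ^ (d + 1) :=
      Real.rpow_le_rpow_of_exponent_le hk1 (by linarith)
    have h2 := hkey k hk
    have htk : (0:ℝ) < t ^ k := pow_pos htp k
    have h3 : c * t ^ k * (t - 2) / (t - 1) ≤ c * t ^ k := by
      rw [div_le_iff₀ ht0]
      nlinarith [mul_pos hc htk]
    have h4 : c₁ * (k:ℝ) ^ d < c * t ^ k := by
      have : c₁ * (k:ℝ) ^ d ≤ 2 * c₁ * (k:ℝ) ^ (d + 1) := by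
        nlinarith [Real.rpow_pos_of_pos (by linarith : (0:ℝ) < (k:ℝ)) d]
      linarith
    linarith [(abs_le.mp hek).1]
  refine ⟨hpos, ?_, ?_⟩
  · -- monotone
    intro k hk
    have hk1 : (1:ℝ) ≤ (k:ℝ) := by exact_mod_cast le_trans hk₀1 hk
    have hkk1 : (1:ℝ) ≤ ((k+1:ℕ):ℝ) := by push_cast; linarith
    have hek := (abs_le.mp (he k (le_trans hk₀1 hk))).2
    have hek1 := (abs_le.mp (he (k+1) (by omega))).1
    have htk : (0:ℝ) < t ^ k := pow_pos htp k
    have hkey1 := hkey (k+1) (by omega)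
    -- c₁ k^d ≤ c₁ (k+1)^{d+1} and c₁(k+1)^d ≤ c₁(k+1)^{d+1}
    have hb1 : (k:ℝ) ^ d ≤ ((k+1:ℕ):ℝ) ^ d := by
      apply Real.rpow_le_rpow (by positivity) (by push_cast; linarith) (le_of_lt hd)
    have hb2 : ((k+1:ℕ):ℝ) ^ d ≤ ((k+1:ℕ):ℝ) ^ (d + 1) :=
      Real.rpow_le_rpow_of_exponent_le hkk1 (by linarith)
    have h6 : c * t ^ (k+1) * (t - 2) / (t - 1) ≤ c * t ^ k * (t - 1) := by
      rw [div_le_iff₀ ht0, pow_succ]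
      nlinarith [mul_pos hc htk]
    have hts : t ^ (k+1) = t ^ k * t := pow_succ t k
    push_cast at hkey1 hb1 hb2 hek1 ⊢
    nlinarith [mul_pos hc htk]
  · -- B_infinity
    intro I J hI hJ hsum
    by_contra hne
    set A : Finset ℕ := I \ J with hAdef
    set B : Finset ℕ := J \ I with hBdef
    have hAI : A ⊆ I := Finset.sdiff_subset
    have hBJ : B ⊆ J := Finset.sdiff_subset
    have hsumA : ∑ i ∈ A, (c * t ^ i + e i) = ∑ j ∈ B, (c * t ^ j + e j) := by
      have e1 : ∑ i ∈ A, (c * t ^ i + e i)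
          = ∑ i ∈ I, (c * t ^ i + e i) - ∑ i ∈ I ∩ J, (c * t ^ i + e i) := by
        rw [hAdef, ← Finset.sdiff_inter_self_left I J]
        exact Finset.sum_sdiff_eq_sub Finset.inter_subset_left
      have e2 : ∑ j ∈ B, (c * t ^ j + e j)
          = ∑ j ∈ J, (c * t ^ j + e j) - ∑ j ∈ J ∩ I, (c * t ^ j + e j) := by
        rw [hBdef, ← Finset.sdiff_inter_self_left J I]
        exact Finset.sum_sdiff_eq_sub Finset.inter_subset_left
      rw [e1, e2, Finset.inter_comm, hsum]
    have hABne : (A ∪ B).Nonempty := by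
      rw [Finset.nonempty_iff_ne_empty]
      intro h
      rw [Finset.union_eq_empty] at h
      exact hne (Finset.Subset.antisymm
        (Finset.sdiff_eq_empty_iff_subset.mp h.1) (Finset.sdiff_eq_empty_iff_subset.mp h.2))
    set m : ℕ := (A ∪ B).max' hABne with hmdef
    have hmax : ∀ x ∈ A ∪ B, x ≤ m := fun x hx => Finset.le_max' _ x hx
    have hdisj : Disjoint A B := disjoint_sdiff_sdiff
    have hmem : m ∈ A ∪ B := Finset.max'_mem _ hABne
    rcases Finset.mem_union.mp hmem with hmA | hmB
    · exact stmt10_aux c c₁ d t hc hc₁ hd ht e he k₀ hk₀1 hkey A B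
        (fun i hi => hI i (hAI hi)) (fun j hj => hJ j (hBJ hj)) hdisj m hmA hmax hsumA
    · exact stmt10_aux c c₁ d t hc hc₁ hd ht e he k₀ hk₀1 hkey B A
        (fun j hj => hJ j (hBJ hj)) (fun i hi => hI i (hAI hi)) hdisj.symm m hmB
        (fun x hx => hmax x (Finset.union_comm A B ▸ hx)) hsumA.symm
end

section
/- Let c, c₁, d, t be positive real numbers with t > 2, and let {e_k}_{k=1}^∞ be a sequence of real numbers with |e_k| ≤ c₁kᵈ for all k ≥ 1. Let k₀ be a positive integer such that the sequence W = {c·tᵏ + e_k}_{k=k₀}^∞ is a B̂_∞-sequence of positive reals. Then W has many partition products in the additive semigroup of real numbers; in fact Φ(r) ≥ r − 1 for every positive integer r. -/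
open Filter

/-- `W_r(n)` for a sequence `{w_k}_{k ≥ k₀}` of reals under addition: the set of
sums `w_{k₁} + ⋯ + w_{k_r}` with indices `k₁ ≥ ⋯ ≥ k_r ≥ k₀` and
`k₁ + ⋯ + k_r ≤ n`. -/
def WrSetAdd (w : ℕ → ℝ) (k₀ r n : ℕ) : Set ℝ :=
  {x : ℝ | ∃ l : List ℕ, l.length = r ∧ (∀ k ∈ l, k₀ ≤ k) ∧ l.sum ≤ n ∧
    List.Pairwise (· ≥ ·) l ∧ x = (l.map w).sum}

/-- `Φ(r) = liminf_{n→∞} (log card W_r(n)) / (log n)`. -/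
noncomputable def PhiAdd (w : ℕ → ℝ) (k₀ r : ℕ) : ℝ :=
  Filter.liminf
    (fun n : ℕ => Real.log (Set.ncard (WrSetAdd w k₀ r n)) / Real.log n)
    Filter.atTop

/-!
Sums over distinct index sets are distinct in a `B̂_∞`-sequence, so `card W_r(n)` is at least the
number of `r`-element index sets `S ⊆ [k₀, ∞)` with `∑ S ≤ n`. Picking one index in each of `r`
consecutive blocks of length `m ≈ n / (2r²)` gives `m ^ r ≥ n ^ (r - 1)` such sets for large `n`.
Together with the trivial bound `card W_r(n) ≤ (n + 1) ^ r`, which keeps `log card / log n`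
bounded (otherwise the real `liminf` would be a junk value), this gives `Φ(r) ≥ r - 1`.
-/
open Finset

def IsBHatInfty (w : ℕ → ℝ) (k₀ : ℕ) : Prop :=
  ∀ I J : Finset ℕ, (∀ i ∈ I, k₀ ≤ i) → (∀ j ∈ J, k₀ ≤ j) →
    ∑ i ∈ I, w i = ∑ j ∈ J, w j → I = J

section WrSetAdd

variable (w : ℕ → ℝ) (k₀ r n : ℕ)

theorem WrSetAdd_subset_range :
    WrSetAdd w k₀ r n ⊆ Set.range fun f : Fin r → Fin (n + 1) => ∑ i, w (f i) := by
  rintro x ⟨l, rfl, -, hsum, -, rfl⟩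
  refine ⟨fun i => ⟨l.get i,
    Nat.lt_succ_of_le ((List.le_sum_of_mem (List.get_mem l i)).trans hsum)⟩, ?_⟩
  conv_rhs => rw [← List.ofFn_get l, List.map_ofFn, List.sum_ofFn]
  rfl

theorem finite_WrSetAdd : (WrSetAdd w k₀ r n).Finite :=
  (Set.finite_range _).subset (WrSetAdd_subset_range w k₀ r n)

theorem ncard_WrSetAdd_le : (WrSetAdd w k₀ r n).ncard ≤ (n + 1) ^ r := by
  classical
  calc (WrSetAdd w k₀ r n).ncard
      ≤ (Set.range fun f : Fin r → Fin (n + 1) => ∑ i, w (f i)).ncard :=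
        Set.ncard_le_ncard (WrSetAdd_subset_range w k₀ r n) (Set.finite_range _)
    _ ≤ (univ.image fun f : Fin r → Fin (n + 1) => ∑ i, w (f i)).card := by
        rw [← Set.ncard_coe_finset, coe_image, coe_univ, Set.image_univ]
    _ ≤ (n + 1) ^ r := card_image_le.trans (by simp)

variable {w k₀ r n}

theorem sum_mem_WrSetAdd {S : Finset ℕ} (hcard : S.card = r) (hk₀ : ∀ k ∈ S, k₀ ≤ k)
    (hsum : ∑ k ∈ S, k ≤ n) : ∑ k ∈ S, w k ∈ WrSetAdd w k₀ r n := by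
  have hperm := S.sort_perm_toList (· ≥ ·)
  refine ⟨S.sort (· ≥ ·), by rw [length_sort, hcard], fun k hk => hk₀ k (mem_sort _ |>.1 hk),
    ?_, S.pairwise_sort _, ?_⟩
  · rwa [hperm.sum_eq, sum_toList]
  · rw [(hperm.map w).sum_eq, sum_map_toList]

theorem card_le_ncard_WrSetAdd (hB : IsBHatInfty w k₀) (𝒮 : Finset (Finset ℕ))
    (h𝒮 : ∀ S ∈ 𝒮, S.card = r ∧ (∀ k ∈ S, k₀ ≤ k) ∧ ∑ k ∈ S, k ≤ n) :
    𝒮.card ≤ (WrSetAdd w k₀ r n).ncard := by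
  classical
  have hinj : Set.InjOn (fun S => ∑ k ∈ S, w k) 𝒮 := fun S hS T hT hST =>
    hB S T (h𝒮 S hS).2.1 (h𝒮 T hT).2.1 hST
  rw [← card_image_of_injOn hinj, ← Set.ncard_coe_finset]
  refine Set.ncard_le_ncard ?_ (finite_WrSetAdd w k₀ r n)
  intro x hx
  obtain ⟨S, hS, rfl⟩ := mem_image.1 hx
  exact sum_mem_WrSetAdd (h𝒮 S hS).1 (h𝒮 S hS).2.1 (h𝒮 S hS).2.2

end WrSetAdd

-- The `i`-th element lies in the block `[k₀ + i m, k₀ + (i + 1) m)`.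
def blockSet (k₀ : ℕ) {r m : ℕ} (g : Fin r → Fin m) : Finset ℕ :=
  univ.image fun i => k₀ + (finProdFinEquiv (i, g i) : ℕ)

section blockSet

variable {k₀ r m : ℕ}

theorem blockSet_injective : Function.Injective (blockSet k₀ : (Fin r → Fin m) → Finset ℕ) := by
  intro g g' h
  funext i
  have hi : k₀ + (finProdFinEquiv (i, g i) : ℕ) ∈ blockSet k₀ g' :=
    h ▸ mem_image_of_mem _ (mem_univ i)
  obtain ⟨j, -, hj⟩ := mem_image.1 hi
  obtain ⟨rfl, hgj⟩ :=
    Prod.ext_iff.1 (finProdFinEquiv.injective (Fin.ext (Nat.add_left_cancel hj)))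
  exact hgj.symm

theorem card_blockSet (g : Fin r → Fin m) : (blockSet k₀ g).card = r := by
  rw [blockSet, card_image_of_injective, card_univ, Fintype.card_fin]
  intro i j hij
  exact congrArg Prod.fst (finProdFinEquiv.injective (Fin.ext (Nat.add_left_cancel hij)))

theorem le_of_mem_blockSet {g : Fin r → Fin m} {k : ℕ} (hk : k ∈ blockSet k₀ g) : k₀ ≤ k := by
  obtain ⟨i, -, rfl⟩ := mem_image.1 hk
  exact Nat.le_add_right _ _

theorem lt_of_mem_blockSet {g : Fin r → Fin m} {k : ℕ} (hk : k ∈ blockSet k₀ g) :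
    k < k₀ + r * m := by
  obtain ⟨i, -, rfl⟩ := mem_image.1 hk
  exact Nat.add_lt_add_left (finProdFinEquiv (i, g i)).isLt k₀

theorem sum_blockSet_le (g : Fin r → Fin m) : ∑ k ∈ blockSet k₀ g, k ≤ r * (k₀ + r * m) := by
  calc ∑ k ∈ blockSet k₀ g, k ≤ (blockSet k₀ g).card • (k₀ + r * m) :=
        sum_le_card_nsmul _ _ _ fun k hk => (lt_of_mem_blockSet hk).le
    _ = r * (k₀ + r * m) := by rw [card_blockSet, smul_eq_mul]

end blockSet

theorem pow_le_ncard_WrSetAdd {w : ℕ → ℝ} {k₀ r n m : ℕ} (hB : IsBHatInfty w k₀)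
    (hn : r * (k₀ + r * m) ≤ n) : m ^ r ≤ (WrSetAdd w k₀ r n).ncard := by
  classical
  calc m ^ r = (univ.image (blockSet k₀ : (Fin r → Fin m) → Finset ℕ)).card := by
        rw [card_image_of_injective _ blockSet_injective, card_univ, Fintype.card_fun,
          Fintype.card_fin, Fintype.card_fin]
    _ ≤ (WrSetAdd w k₀ r n).ncard := by
        refine card_le_ncard_WrSetAdd hB _ fun S hS => ?_
        obtain ⟨g, -, rfl⟩ := mem_image.1 hS
        exact ⟨card_blockSet g, fun k => le_of_mem_blockSet, (sum_blockSet_le g).trans hn⟩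

theorem eventually_exists_blockSize {r : ℕ} (hr : 0 < r) (k₀ : ℕ) :
    ∀ᶠ n in atTop, ∃ m, r * (k₀ + r * m) ≤ n ∧ n ^ (r - 1) ≤ m ^ r := by
  set q := 2 * r * r
  have hq : 0 < q := by positivity
  filter_upwards [eventually_ge_atTop (q * ((2 * q) ^ (r - 1) + k₀ + 1))] with n hn
  set m := n / q
  have hm : (2 * q) ^ (r - 1) + k₀ + 1 ≤ m := (Nat.le_div_iff_mul_le hq).2 (by linarith)
  have hmq : m * q ≤ n := Nat.div_mul_le_self n q
  refine ⟨m, ?_, ?_⟩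
  · calc r * (k₀ + r * m) ≤ r * (r * m + r * m) := by
          gcongr
          exact (by omega : k₀ ≤ m).trans (Nat.le_mul_of_pos_left m hr)
      _ = m * q := by ring
      _ ≤ n := hmq
  · have hn2 : n ≤ 2 * q * m := by
      have hlt : n < q * (m + 1) := Nat.lt_mul_div_succ n hq
      have hqm : q ≤ q * m := Nat.le_mul_of_pos_right q (by omega)
      linarith
    calc n ^ (r - 1) ≤ (2 * q * m) ^ (r - 1) := Nat.pow_le_pow_left hn2 _
      _ = (2 * q) ^ (r - 1) * m ^ (r - 1) := Nat.mul_pow _ _ _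
      _ ≤ m * m ^ (r - 1) := Nat.mul_le_mul_right _ (by omega)
      _ = m ^ r := by rw [← pow_succ', Nat.sub_add_cancel hr]

theorem le_log_div_log_of_pow_le {x : ℝ} (hx : 1 < x) {a N : ℕ} (h : x ^ a ≤ N) :
    (a : ℝ) ≤ Real.log N / Real.log x := by
  rw [le_div_iff₀ (Real.log_pos hx), ← Real.log_pow]
  exact Real.log_le_log (by positivity) h

theorem log_div_log_le_of_le_pow_s11 {x : ℝ} (hx : 1 < x) {b N : ℕ} (h : (N : ℝ) ≤ x ^ b) :
    Real.log N / Real.log x ≤ b := by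
  rw [div_le_iff₀ (Real.log_pos hx), ← Real.log_pow]
  rcases N.eq_zero_or_pos with rfl | hN
  · simpa using Real.log_nonneg (one_le_pow₀ hx.le)
  · exact Real.log_le_log (by exact_mod_cast hN) h

theorem le_PhiAdd {w : ℕ → ℝ} {k₀ r : ℕ} (hB : IsBHatInfty w k₀) (hr : 1 ≤ r) :
    (r : ℝ) - 1 ≤ PhiAdd w k₀ r := by
  refine le_liminf_of_le (IsBoundedUnder.isCoboundedUnder_ge ⟨(2 * r : ℕ), ?_⟩) ?_
  · rw [eventually_map]
    filter_upwards [eventually_ge_atTop 2] with n hn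
    refine log_div_log_le_of_le_pow_s11 (by exact_mod_cast hn) ?_
    have hn2 : n + 1 ≤ n ^ 2 := by nlinarith
    exact_mod_cast (ncard_WrSetAdd_le w k₀ r n).trans
      ((Nat.pow_le_pow_left hn2 r).trans_eq (pow_mul n 2 r).symm)
  · filter_upwards [eventually_exists_blockSize hr k₀, eventually_ge_atTop 2]
      with n ⟨m, hmn, hpow⟩ hn
    have hcard : n ^ (r - 1) ≤ (WrSetAdd w k₀ r n).ncard :=
      hpow.trans (pow_le_ncard_WrSetAdd hB hmn)
    have := le_log_div_log_of_pow_le (x := n) (by exact_mod_cast hn) (by exact_mod_cast hcard)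
    rwa [Nat.cast_sub hr, Nat.cast_one] at this

theorem tendsto_PhiAdd_atTop {w : ℕ → ℝ} {k₀ : ℕ} (hB : IsBHatInfty w k₀) :
    Tendsto (fun r : ℕ => PhiAdd w k₀ r) atTop atTop := by
  refine tendsto_atTop_mono' atTop ?_ (tendsto_atTop_add_const_right atTop (-1)
    tendsto_natCast_atTop_atTop)
  filter_upwards [eventually_ge_atTop 1] with r hr
  rw [← sub_eq_add_neg]
  exact le_PhiAdd hB hr

theorem stmt11_general (c t : ℝ) (e : ℕ → ℝ)
    (k₀ : ℕ)
    (hB : ∀ I J : Finset ℕ, (∀ i ∈ I, k₀ ≤ i) → (∀ j ∈ J, k₀ ≤ j) →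
      ∑ i ∈ I, (c * t ^ i + e i) = ∑ j ∈ J, (c * t ^ j + e j) → I = J) :
    (∀ r : ℕ, 1 ≤ r →
      (r : ℝ) - 1 ≤ PhiAdd (fun k => c * t ^ k + e k) k₀ r) ∧
    Tendsto (fun r : ℕ => PhiAdd (fun k => c * t ^ k + e k) k₀ r)
      atTop atTop :=
  ⟨fun _ hr => le_PhiAdd hB hr, tendsto_PhiAdd_atTop hB⟩

/-- let `c, c₁, d, t` be positive reals with `t > 2` and `{e_k}`
reals with `|e_k| ≤ c₁ kᵈ` for `k ≥ 1`.  Let `k₀` be a positive integer such that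
`W = {c tᵏ + e_k}_{k ≥ k₀}` is a `B̂_∞`-sequence of positive reals.  Then `W` has
many partition products in `(ℝ, +)`; in fact `Φ(r) ≥ r - 1` for every `r ≥ 1`. -/
theorem stmt11 (c c₁ d t : ℝ) (hc : 0 < c) (hc₁ : 0 < c₁) (hd : 0 < d)
    (ht : 2 < t) (e : ℕ → ℝ)
    (he : ∀ k : ℕ, 1 ≤ k → |e k| ≤ c₁ * (k : ℝ) ^ d)
    (k₀ : ℕ) (hk₀ : 0 < k₀)
    (hpos : ∀ k, k₀ ≤ k → 0 < c * t ^ k + e k)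
    (hB : ∀ I J : Finset ℕ, (∀ i ∈ I, k₀ ≤ i) → (∀ j ∈ J, k₀ ≤ j) →
      ∑ i ∈ I, (c * t ^ i + e i) = ∑ j ∈ J, (c * t ^ j + e j) → I = J) :
    (∀ r : ℕ, 1 ≤ r →
      (r : ℝ) - 1 ≤ PhiAdd (fun k => c * t ^ k + e k) k₀ r) ∧
    Tendsto (fun r : ℕ => PhiAdd (fun k => c * t ^ k + e k) k₀ r)
      atTop atTop :=
  stmt11_general c t e k₀ hB
end

section
/- In M₂(ℤ), let g = [[1, d], [0, 1]] and e = [[1, 0], [1, 0]] for a positive integer d. For positive integers u₁, u₂ with u₁ ≡ u₂ ≡ 1 (mod d) and nonnegative integers i₁, j₁, i₂, j₂: g^{i₁}·(u₁e)·g^{j₁} = g^{i₂}·(u₂e)·g^{j₂} if and only if u₁ = u₂, i₁ = i₂, and j₁ = j₂. -/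
lemma pow_g_aux (d : ℕ) (n : ℕ) :
    (!![1, (d : ℤ); 0, 1]) ^ n = !![1, (n : ℤ) * d; 0, 1] := by
  induction n with
  | zero => simp [Matrix.one_fin_two]
  | succ k ih =>
      rw [pow_succ, ih]
      ext i j
      fin_cases i <;> fin_cases j <;>
        simp [Matrix.mul_apply, Fin.sum_univ_two] <;> ring

/-- in `M₂(ℤ)`, with `g = [[1,d],[0,1]]` and `e = [[1,0],[1,0]]`
for a positive integer `d`, and positive integers `u₁ ≡ u₂ ≡ 1 (mod d)`:
`g^{i₁}·(u₁e)·g^{j₁} = g^{i₂}·(u₂e)·g^{j₂}` if and only if `u₁ = u₂`, `i₁ = i₂`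
and `j₁ = j₂`. -/
theorem stmt14 (d : ℕ) (hd : 0 < d)
    (g e : Matrix (Fin 2) (Fin 2) ℤ)
    (hg : g = !![1, (d : ℤ); 0, 1]) (he : e = !![1, 0; 1, 0])
    (u₁ u₂ : ℕ) (hu₁ : 0 < u₁) (hu₂ : 0 < u₂)
    (hu₁d : u₁ % d = 1 % d) (hu₂d : u₂ % d = 1 % d)
    (i₁ j₁ i₂ j₂ : ℕ) :
    g ^ i₁ * ((u₁ : ℤ) • e) * g ^ j₁ = g ^ i₂ * ((u₂ : ℤ) • e) * g ^ j₂ ↔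
      u₁ = u₂ ∧ i₁ = i₂ ∧ j₁ = j₂ := by
  subst hg he
  rw [pow_g_aux, pow_g_aux, pow_g_aux, pow_g_aux]
  constructor
  · intro h
    have h10 := congrFun (congrFun h 1) 0
    have h00 := congrFun (congrFun h 0) 0
    have h11 := congrFun (congrFun h 1) 1
    simp [Matrix.mul_apply, Fin.sum_univ_two] at h10 h00 h11
    have hu : u₁ = u₂ := by exact_mod_cast h10
    subst hu
    have hd' : (0:ℤ) < d := by exact_mod_cast hd
    have hu' : (0:ℤ) < u₁ := by exact_mod_cast hu₁
    refine ⟨rfl, ?_, ?_⟩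
    · have hne : ((d : ℤ) * u₁) ≠ 0 := by positivity
      have h00' : (i₁ : ℤ) * (d * u₁) = i₂ * (d * u₁) := by linarith [h00]
      have : (i₁ : ℤ) = i₂ := mul_right_cancel₀ hne h00'
      exact_mod_cast this
    · have hne : ((d : ℤ) * u₁) ≠ 0 := by positivity
      have h11' : (j₁ : ℤ) * (d * u₁) = j₂ * (d * u₁) := by linarith [h11]
      have : (j₁ : ℤ) = j₂ := mul_right_cancel₀ hne h11'
      exact_mod_cast this
  · rintro ⟨rfl, rfl, rfl⟩
    rfl
end

section
/- Let g = [[s, v, w], [0, t, u], [0, 0, r]] and e = [[1,0,0],[0,0,0],[0,0,1]] be 3×3 matrices over a commutative ring, and let w_k = w·F_{k−1}(r,s) + uv·F_{k−2}(r,s,t). Then e gᵏ e = [[sᵏ, 0, w_k], [0,0,0], [0,0,rᵏ]], e g^{k₁} e g^{k₂} e = [[s^{k₁+k₂}, 0, s^{k₁}w_{k₂} + r^{k₂}w_{k₁}], [0,0,0], [0,0,r^{k₁+k₂}]], and e g^{k₁} e g^{k₂} e = e g^{k₂} e g^{k₁} e if and only if s^{k₁}w_{k₂} + r^{k₂}w_{k₁}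 = s^{k₂}w_{k₁} + r^{k₁}w_{k₂}. In particular, if r = s = 1 then e g^{k₁} e g^{k₂} e = e g^{k₂} e g^{k₁} e for all nonnegative integers k₁, k₂. -/
/-- The complete homogeneous symmetric polynomial `F_k(x,y) = Σ_{i+j=k} xⁱyʲ` in
two variables, with `F_k = 0` for `k < 0` (index in `ℤ`). -/
def F2 {R : Type*} [CommRing R] (k : ℤ) (x y : R) : R :=
  if 0 ≤ k then ∑ i ∈ Finset.range (k.toNat + 1), x ^ i * y ^ (k.toNat - i) else 0

/-- The complete homogeneous symmetric polynomial
`F_k(x,y,z) = Σ_{i+j+l=k} xⁱyʲzˡ` in three variables, with `F_k = 0` for `k < 0`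
(index in `ℤ`). -/
def F3 {R : Type*} [CommRing R] (k : ℤ) (x y z : R) : R :=
  if 0 ≤ k then
    ∑ i ∈ Finset.range (k.toNat + 1), ∑ j ∈ Finset.range (k.toNat + 1 - i),
      x ^ i * y ^ j * z ^ (k.toNat - i - j)
  else 0

/-- `w_k = w·F_{k-1}(r,s) + uv·F_{k-2}(r,s,t)`. -/
def wCoeff {R : Type*} [CommRing R] (r s t u v w : R) (k : ℕ) : R :=
  w * F2 ((k : ℤ) - 1) r s + u * v * F3 ((k : ℤ) - 2) r s t

section
variable {R : Type*} [CommRing R] (x y z : R)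

lemma F2_comm (k : ℤ) : F2 k x y = F2 k y x := by
  unfold F2
  split_ifs with h
  · rw [← Finset.sum_range_reflect]
    apply Finset.sum_congr rfl
    intro i hi
    have hi' : i < k.toNat + 1 := Finset.mem_range.mp hi
    rw [show k.toNat + 1 - 1 - i = k.toNat - i by omega,
      show k.toNat - (k.toNat - i) = i by omega]
    ring
  · rfl

lemma F2_succ (k : ℕ) : F2 (k : ℤ) x y = x * F2 ((k : ℤ) - 1) x y + y ^ k := by
  cases k with
  | zero => simp [F2]
  | succ n =>
    have h1 : ((n + 1 : ℕ) : ℤ) - 1 = (n : ℤ) := by push_cast; ring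
    rw [h1]
    simp only [F2, if_pos (by positivity : (0:ℤ) ≤ ((n+1:ℕ):ℤ)),
      if_pos (by positivity : (0:ℤ) ≤ ((n:ℕ):ℤ)), Int.toNat_natCast]
    rw [Finset.sum_range_succ', Finset.mul_sum]
    congr 1
    · apply Finset.sum_congr rfl
      intro i hi
      have hi' : i < n + 1 := Finset.mem_range.mp hi
      rw [show n + 1 - (i + 1) = n - i by omega]
      ring
    · simp

lemma F3_succ (k : ℕ) :
    F3 (k : ℤ) x y z = y * F3 ((k : ℤ) - 1) x y z + F2 (k : ℤ) x z := by
  cases k with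
  | zero => simp [F2, F3]
  | succ n =>
    have h1 : ((n + 1 : ℕ) : ℤ) - 1 = (n : ℤ) := by push_cast; ring
    rw [h1]
    simp only [F3, F2, if_pos (by positivity : (0:ℤ) ≤ ((n+1:ℕ):ℤ)),
      if_pos (by positivity : (0:ℤ) ≤ ((n:ℕ):ℤ)), Int.toNat_natCast]
    have hsplit : ∀ i ∈ Finset.range (n + 2),
        ∑ j ∈ Finset.range (n + 1 + 1 - i), x ^ i * y ^ j * z ^ (n + 1 - i - j)
          = y * (∑ j ∈ Finset.range (n + 1 - i), x ^ i * y ^ j * z ^ (n - i - j))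
            + x ^ i * z ^ (n + 1 - i) := by
      intro i hi
      have hi' : i < n + 2 := Finset.mem_range.mp hi
      rw [show n + 1 + 1 - i = (n + 1 - i) + 1 by omega, Finset.sum_range_succ',
        Finset.mul_sum]
      congr 1
      · apply Finset.sum_congr rfl
        intro j hj
        have hj' : j < n + 1 - i := Finset.mem_range.mp hj
        rw [show n + 1 - i - (j + 1) = n - i - j by omega]
        ring
      · rw [show n + 1 - i - 0 = n + 1 - i by omega]; ring
    rw [show n + 1 + 1 = n + 2 by rfl] at *
    rw [Finset.sum_congr rfl hsplit, Finset.sum_add_distrib]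
    congr 1
    rw [Finset.sum_range_succ]
    simp [Finset.mul_sum]
end

section
variable {R : Type*} [CommRing R]

lemma F3_pred (x y z : R) (k : ℕ) :
    F3 ((k : ℤ) - 1) x y z = y * F3 ((k : ℤ) - 2) x y z + F2 ((k : ℤ) - 1) x z := by
  cases k with
  | zero => simp [F2, F3]
  | succ m =>
    have h1 : ((m + 1 : ℕ) : ℤ) - 1 = (m : ℤ) := by push_cast; ring
    have h2 : ((m + 1 : ℕ) : ℤ) - 2 = (m : ℤ) - 1 := by push_cast; ring
    rw [h1, h2]
    exact F3_succ x y z m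

lemma wCoeff_succ (r s t u v w : R) (k : ℕ) :
    wCoeff r s t u v w (k + 1) =
      s * wCoeff r s t u v w k + u * v * F2 ((k : ℤ) - 1) r t + w * r ^ k := by
  unfold wCoeff
  have h1 : ((k + 1 : ℕ) : ℤ) - 1 = (k : ℤ) := by push_cast; ring
  have h2 : ((k + 1 : ℕ) : ℤ) - 2 = (k : ℤ) - 1 := by push_cast; ring
  rw [h1, h2, F3_pred, F2_comm r s, F2_succ, F2_comm s r]
  ring
end

/-- for `g = [[s,v,w],[0,t,u],[0,0,r]]` and
`e = [[1,0,0],[0,0,0],[0,0,1]]` over a commutative ring, with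
`w_k = w·F_{k-1}(r,s) + uv·F_{k-2}(r,s,t)`:
`e gᵏ e = [[sᵏ, 0, w_k],[0,0,0],[0,0,rᵏ]]`,
`e g^{k₁} e g^{k₂} e = [[s^{k₁+k₂}, 0, s^{k₁}w_{k₂} + r^{k₂}w_{k₁}],[0,0,0],
[0,0,r^{k₁+k₂}]]`, and `e g^{k₁} e g^{k₂} e = e g^{k₂} e g^{k₁} e` iff
`s^{k₁}w_{k₂} + r^{k₂}w_{k₁} = s^{k₂}w_{k₁} + r^{k₁}w_{k₂}`; in particular, if
`r = s = 1` the products commute for all `k₁, k₂ ≥ 0`. -/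
theorem stmt16 {R : Type*} [CommRing R] (r s t u v w : R)
    (g e : Matrix (Fin 3) (Fin 3) R)
    (hg : g = !![s, v, w; 0, t, u; 0, 0, r])
    (he : e = !![1, 0, 0; 0, 0, 0; 0, 0, 1]) :
    (∀ k : ℕ, e * g ^ k * e =
      !![s ^ k, 0, wCoeff r s t u v w k; 0, 0, 0; 0, 0, r ^ k]) ∧
    (∀ k₁ k₂ : ℕ, e * g ^ k₁ * e * g ^ k₂ * e =
      !![s ^ (k₁ + k₂), 0,
          s ^ k₁ * wCoeff r s t u v w k₂ + r ^ k₂ * wCoeff r s t u v w k₁;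
        0, 0, 0; 0, 0, r ^ (k₁ + k₂)]) ∧
    (∀ k₁ k₂ : ℕ,
      e * g ^ k₁ * e * g ^ k₂ * e = e * g ^ k₂ * e * g ^ k₁ * e ↔
        s ^ k₁ * wCoeff r s t u v w k₂ + r ^ k₂ * wCoeff r s t u v w k₁ =
          s ^ k₂ * wCoeff r s t u v w k₁ + r ^ k₁ * wCoeff r s t u v w k₂) ∧
    (r = 1 → s = 1 → ∀ k₁ k₂ : ℕ,
      e * g ^ k₁ * e * g ^ k₂ * e = e * g ^ k₂ * e * g ^ k₁ * e) := by
  have key : ∀ k : ℕ, g ^ k =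
      !![s ^ k, v * F2 ((k : ℤ) - 1) s t, wCoeff r s t u v w k;
         0, t ^ k, u * F2 ((k : ℤ) - 1) t r;
         0, 0, r ^ k] := by
    intro k
    induction k with
    | zero =>
      simp [F2, wCoeff, F3, Matrix.one_fin_three]
    | succ n ih =>
      have hc : ((n + 1 : ℕ) : ℤ) - 1 = (n : ℤ) := by push_cast; ring
      have hB : v * F2 (((n + 1 : ℕ) : ℤ) - 1) s t
          = s * (v * F2 ((n : ℤ) - 1) s t) + v * t ^ n := by
        rw [hc, F2_succ]; ring
      have hC : u * F2 (((n + 1 : ℕ) : ℤ) - 1) t r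
          = t * (u * F2 ((n : ℤ) - 1) t r) + u * r ^ n := by
        rw [hc, F2_succ]; ring
      have hW : wCoeff r s t u v w (n + 1)
          = s * wCoeff r s t u v w n + v * (u * F2 ((n : ℤ) - 1) t r) + w * r ^ n := by
        rw [wCoeff_succ, F2_comm t r]; ring
      rw [pow_succ', ih, hg, Matrix.mul_fin_three, hB, hC, hW]
      ext i j
      fin_cases i <;> fin_cases j <;> simp <;> ring
  have h1 : ∀ k : ℕ, e * g ^ k * e =
      !![s ^ k, 0, wCoeff r s t u v w k; 0, 0, 0; 0, 0, r ^ k] := by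
    intro k
    rw [key k, he, Matrix.mul_fin_three, Matrix.mul_fin_three]
    ext i j
    fin_cases i <;> fin_cases j <;> simp
  have h2 : ∀ k₁ k₂ : ℕ, e * g ^ k₁ * e * g ^ k₂ * e =
      !![s ^ (k₁ + k₂), 0,
          s ^ k₁ * wCoeff r s t u v w k₂ + r ^ k₂ * wCoeff r s t u v w k₁;
        0, 0, 0; 0, 0, r ^ (k₁ + k₂)] := by
    intro k₁ k₂
    rw [h1 k₁, key k₂, he, Matrix.mul_fin_three, Matrix.mul_fin_three]
    ext i j
    fin_cases i <;> fin_cases j <;> simp <;> ring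
  have h3 : ∀ k₁ k₂ : ℕ,
      e * g ^ k₁ * e * g ^ k₂ * e = e * g ^ k₂ * e * g ^ k₁ * e ↔
        s ^ k₁ * wCoeff r s t u v w k₂ + r ^ k₂ * wCoeff r s t u v w k₁ =
          s ^ k₂ * wCoeff r s t u v w k₁ + r ^ k₁ * wCoeff r s t u v w k₂ := by
    intro k₁ k₂
    rw [h2 k₁ k₂, h2 k₂ k₁]
    constructor
    · intro h
      simpa using congrFun (congrFun h 0) 2
    · intro h
      rw [add_comm k₂ k₁, h]
  refine ⟨h1, h2, h3, ?_⟩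
  intro hr hs k₁ k₂
  subst hr hs
  rw [h3]
  simp [add_comm]
end
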